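/- arXiv:math/0603067 — 5 statements merged into one kernel-verified Lean document; each statement's English description precedes it below -/
import Mathlib

section
/- Let Λ be a compactly aligned topological k-graph, v ∈ Λ^0, λ ∈ vΛ, and E ∈ vCE(Λ). Then for any compact neighbourhood U ⊆ Λ^{d(λ)} of λ, the set of minimal extenders Ext(U; E) belongs to s(λ)CE(Λ). -/
open Set

namespace TKG

/-- A topological `k`-graph: a small category with objects `Obj` and morphisms `Mor`,
a degree functor `d : Mor → ℕ^k` satisfying the unique factorization property, with
second-countable locally compact Hausdorff topologies making the structure maps suitably
continuous, the source map a local homeomorphism and composition continuous and open. -/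
structure TopKGraph (k : ℕ) (Obj Mor : Type)
    [TopologicalSpace Obj] [TopologicalSpace Mor] where
  r : Mor → Obj
  s : Mor → Obj
  ident : Obj → Mor
  comp : ∀ f g : Mor, s f = r g → Mor
  d : Mor → Fin k → ℕ
  r_ident : ∀ v, r (ident v) = v
  s_ident : ∀ v, s (ident v) = v
  d_ident : ∀ v, d (ident v) = 0
  r_comp : ∀ f g h, r (comp f g h) = r f
  s_comp : ∀ f g h, s (comp f g h) = s g
  d_comp : ∀ f g h, d (comp f g h) = d f + d g
  ident_comp : ∀ (f : Mor) (h : s (ident (r f)) = r f), comp (ident (r f)) f h = f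
  comp_ident : ∀ (f : Mor) (h : s f = r (ident (s f))), comp f (ident (s f)) h = f
  comp_assoc : ∀ (f g h : Mor) (hfg : s f = r g) (hgh : s g = r h)
    (h1 : s (comp f g hfg) = r h) (h2 : s f = r (comp g h hgh)),
    comp (comp f g hfg) h h1 = comp f (comp g h hgh) h2
  factor : ∀ (f : Mor) (m n : Fin k → ℕ), d f = m + n →
    ∃! gh : Mor × Mor, ∃ h : s gh.1 = r gh.2,
      comp gh.1 gh.2 h = f ∧ d gh.1 = m ∧ d gh.2 = n
  secondCountableObj : SecondCountableTopology Obj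
  secondCountableMor : SecondCountableTopology Mor
  locallyCompactObj : LocallyCompactSpace Obj
  locallyCompactMor : LocallyCompactSpace Mor
  t2Obj : T2Space Obj
  t2Mor : T2Space Mor
  continuous_r : Continuous r
  continuous_s : Continuous s
  isLocalHomeomorph_s : IsLocalHomeomorph s
  continuous_comp : Continuous fun p : {p : Mor × Mor // s p.1 = r p.2} => comp p.1.1 p.1.2 p.2
  isOpenMap_comp : IsOpenMap fun p : {p : Mor × Mor // s p.1 = r p.2} => comp p.1.1 p.1.2 p.2
  continuous_d : Continuous d

variable {k : ℕ} {Obj Mor : Type} [TopologicalSpace Obj] [TopologicalSpace Mor]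

/-- `Λ^{min}(λ,μ)`: the pairs `(α,β)` with `λα = μβ` and `d(λα) = d(λ) ⊔ d(μ)`. -/
def MinExt (Λ : TopKGraph k Obj Mor) (l m : Mor) : Set (Mor × Mor) :=
  {ab | ∃ (h1 : Λ.s l = Λ.r ab.1) (h2 : Λ.s m = Λ.r ab.2),
      Λ.comp l ab.1 h1 = Λ.comp m ab.2 h2 ∧ Λ.d l + Λ.d ab.1 = Λ.d l ⊔ Λ.d m}

/-- `E ∨ F`: the set of minimal common extensions of paths from `E` and from `F`. -/
def MCE (Λ : TopKGraph k Obj Mor) (E F : Set Mor) : Set Mor :=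
  {f | ∃ l ∈ E, ∃ m ∈ F, Λ.d f = Λ.d l ⊔ Λ.d m ∧
        (∃ (a : Mor) (h : Λ.s l = Λ.r a), Λ.comp l a h = f) ∧
        (∃ (b : Mor) (h : Λ.s m = Λ.r b), Λ.comp m b h = f)}

/-- `Λ` is compactly aligned: `U ∨ V` is compact for all compact `U ⊆ Λ^p`, `V ⊆ Λ^q`. -/
def CompactlyAligned (Λ : TopKGraph k Obj Mor) : Prop :=
  ∀ (p q : Fin k → ℕ) (U V : Set Mor), U ⊆ {f | Λ.d f = p} → V ⊆ {f | Λ.d f = q} →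
    IsCompact U → IsCompact V → IsCompact (MCE Λ U V)

/-- `Λ` is finitely aligned: `Λ^{min}(λ,μ)` is finite for all `λ, μ`. -/
def FinitelyAligned (Λ : TopKGraph k Obj Mor) : Prop :=
  ∀ l m : Mor, (MinExt Λ l m).Finite

/-- An element of the path space `X_Λ`: a degree-preserving functor from `Ω_{k,m}` to `Λ`,
recorded by its degree `m ∈ (ℕ ∪ {∞})^k` and its segments `x(p,q)` for `p ≤ q ≤ m`
(with a fixed junk value outside the domain, so that paths are determined by their
segments on their domain). -/
structure KPath (Λ : TopKGraph k Obj Mor) where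
  deg : Fin k → ℕ∞
  seg : (Fin k → ℕ) → (Fin k → ℕ) → Mor
  seg_junk : ∀ p q, ¬(p ≤ q ∧ ∀ i, (q i : ℕ∞) ≤ deg i) → seg p q = seg 0 0
  d_seg : ∀ p q, p ≤ q → (∀ i, (q i : ℕ∞) ≤ deg i) → Λ.d (seg p q) = q - p
  seg_comp : ∀ p q u, p ≤ q → q ≤ u → (∀ i, (u i : ℕ∞) ≤ deg i) →
    ∃ h : Λ.s (seg p q) = Λ.r (seg q u), Λ.comp (seg p q) (seg q u) h = seg p u
  seg_ident : ∀ p, (∀ i, (p i : ℕ∞) ≤ deg i) → seg p p = Λ.ident (Λ.r (seg p p))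

variable {Λ : TopKGraph k Obj Mor}

/-- `q` is in the domain of the path `x`, i.e. `q ≤ d(x)`. -/
def KPath.dom (x : KPath Λ) (q : Fin k → ℕ) : Prop := ∀ i, (q i : ℕ∞) ≤ x.deg i

/-- The range vertex `r(x) = x(0)` of a path. -/
def KPath.rng (x : KPath Λ) : Obj := Λ.r (x.seg 0 0)

/-- The vertex `x(m)` of a path. -/
def KPath.vtx (x : KPath Λ) (m : Fin k → ℕ) : Obj := Λ.r (x.seg m m)

/-- `y = σ^m x`, the shift of `x` by `m ≤ d(x)`. -/
def IsShiftOf (m : Fin k → ℕ) (x y : KPath Λ) : Prop :=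
  (∀ i, (m i : ℕ∞) ≤ x.deg i) ∧ (∀ i, y.deg i = x.deg i - (m i : ℕ∞)) ∧
  ∀ p q, p ≤ q → (∀ i, (q i : ℕ∞) ≤ y.deg i) → y.seg p q = x.seg (m + p) (m + q)

/-- `y = λ x`, the concatenation of the morphism `λ` with the path `x` (so `s(λ) = r(x)`),
characterized by `d(y) = d(λ) + d(x)`, `y(0,p)` an initial segment of `λ` for `p ≤ d(λ)`,
and `y(0,p) = λ ⬝ x(0, p - d(λ))` for `d(λ) ≤ p ≤ d(y)`. -/
def IsConcatOf (l : Mor) (x y : KPath Λ) : Prop :=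
  Λ.s l = x.rng ∧ (∀ i, y.deg i = (Λ.d l i : ℕ∞) + x.deg i) ∧
  (∀ p, p ≤ Λ.d l →
    ∃ (a : Mor) (h : Λ.s (y.seg 0 p) = Λ.r a),
      Λ.d (y.seg 0 p) = p ∧ Λ.comp (y.seg 0 p) a h = l) ∧
  (∀ p, Λ.d l ≤ p → (∀ i, (p i : ℕ∞) ≤ y.deg i) →
    ∃ h : Λ.s l = Λ.r (x.seg 0 (p - Λ.d l)),
      y.seg 0 p = Λ.comp l (x.seg 0 (p - Λ.d l)) h)

/-- `E` is exhaustive for a set `V` of vertices. -/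
def Exhaustive (Λ : TopKGraph k Obj Mor) (V : Set Obj) (E : Set Mor) : Prop :=
  ∀ l : Mor, Λ.r l ∈ V → ∃ m ∈ E, (MinExt Λ l m).Nonempty

/-- `v CE(Λ)`: compact sets `E` with `r(E)` a neighbourhood of `v` and `E` exhaustive
for `r(E)`. -/
def CE (Λ : TopKGraph k Obj Mor) (v : Obj) : Set (Set Mor) :=
  {E | IsCompact E ∧ Λ.r '' E ∈ nhds v ∧ Exhaustive Λ (Λ.r '' E) E}

/-- `x` is a boundary path: for every `m ≤ d(x)` and every `E ∈ x(m)CE(Λ)` there is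
`λ ∈ E` with `x(m, m + d(λ)) = λ`. -/
def IsBoundary (x : KPath Λ) : Prop :=
  ∀ m : Fin k → ℕ, x.dom m → ∀ E ∈ CE Λ (x.vtx m),
    ∃ l ∈ E, x.dom (m + Λ.d l) ∧ x.seg m (m + Λ.d l) = l

/-- `Z(W)`: the set of paths with an initial segment in `W`. -/
def ZSet (Λ : TopKGraph k Obj Mor) (W : Set Mor) : Set (KPath Λ) :=
  {x | ∃ l ∈ W, x.dom (Λ.d l) ∧ x.seg 0 (Λ.d l) = l}

/-- The topology on the path space `X_Λ`, generated by the sets `Z(U) ∩ Z(F)ᶜ` for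
`U ⊆ Λ` open and `F ⊆ Λ` compact. -/
def pathTopology (Λ : TopKGraph k Obj Mor) : TopologicalSpace (KPath Λ) :=
  TopologicalSpace.generateFrom
    {S | ∃ U F : Set Mor, IsOpen U ∧ IsCompact F ∧ S = ZSet Λ U ∩ (ZSet Λ F)ᶜ}

/-- The ambient space of triples for the path groupoid. -/
abbrev GTriple (Λ : TopKGraph k Obj Mor) : Type :=
  KPath Λ × (Fin k → ℤ) × KPath Λ

/-- The path groupoid `G_Λ` as a set of triples `(x, m, y)` such that `σ^p x = σ^q y`
for some `p ≤ d(x)`, `q ≤ d(y)` with `p - q = m`. -/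
def PathGroupoidCarrier (Λ : TopKGraph k Obj Mor) : Set (GTriple Λ) :=
  {t | ∃ p q : Fin k → ℕ, t.2.1 = (fun i => (p i : ℤ) - (q i : ℤ)) ∧
        ∃ z : KPath Λ, IsShiftOf p t.1 z ∧ IsShiftOf q t.2.2 z}

/-- `Z(F, m) = {(λx, d(λ)-d(μ), μx) : (λ,μ) ∈ F, d(λ)-d(μ) = m}`. -/
def ZG (Λ : TopKGraph k Obj Mor) (F : Set (Mor × Mor)) (m : Fin k → ℤ) :
    Set (GTriple Λ) :=
  {t | t.2.1 = m ∧ ∃ lm ∈ F, Λ.s lm.1 = Λ.s lm.2 ∧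
        (fun i => (Λ.d lm.1 i : ℤ) - (Λ.d lm.2 i : ℤ)) = m ∧
        ∃ x : KPath Λ, IsConcatOf lm.1 x t.1 ∧ IsConcatOf lm.2 x t.2.2}

/-- The topology on the path groupoid `G_Λ`, generated by the sets
`Z(U *ₛ V, m) ∩ Z(F, m)ᶜ` with `U, V` open and `F ⊆ Λ *ₛ Λ` compact. -/
def groupoidTopology (Λ : TopKGraph k Obj Mor) : TopologicalSpace (GTriple Λ) :=
  TopologicalSpace.generateFrom
    {S | ∃ (m : Fin k → ℤ) (U V : Set Mor) (F : Set (Mor × Mor)),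
      IsOpen U ∧ IsOpen V ∧ IsCompact F ∧
      S = ZG Λ ((U ×ˢ V) ∩ {lm | Λ.s lm.1 = Λ.s lm.2}) m ∩ (ZG Λ F m)ᶜ}

/-- A boundary path `x` is aperiodic if `σ^p x ≠ σ^q x` whenever `p ≠ q`,
`p, q ≤ d(x)`. -/
def Aperiodic (x : KPath Λ) : Prop :=
  ∀ p q : Fin k → ℕ, x.dom p → x.dom q → p ≠ q →
    ¬∃ z : KPath Λ, IsShiftOf p x z ∧ IsShiftOf q x z

/-- `Λ` is proper: `U Λ^m` is compact for every compact `U ⊆ Λ^0` and `m ∈ ℕ^k`. -/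
def ProperGraph (Λ : TopKGraph k Obj Mor) : Prop :=
  ∀ (m : Fin k → ℕ) (U : Set Obj), IsCompact U →
    IsCompact {f : Mor | Λ.d f = m ∧ Λ.r f ∈ U}

/-- `Λ` has no sources: every vertex receives an edge of each degree `e_i`. -/
def NoSources (Λ : TopKGraph k Obj Mor) : Prop :=
  ∀ (v : Obj) (i : Fin k), ∃ f : Mor, Λ.d f = Pi.single i 1 ∧ Λ.r f = v

/-- The set `Ext(E; F)` of minimal extenders of `E` by `F`. -/
def ExtSet (Λ : TopKGraph k Obj Mor) (E F : Set Mor) : Set Mor :=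
  {a | ∃ l ∈ E, ∃ m ∈ F, ∃ b : Mor, (a, b) ∈ MinExt Λ l m}

end TKG

namespace TKG

variable {k : ℕ} {Obj Mor : Type} [TopologicalSpace Obj] [TopologicalSpace Mor]

lemma TopKGraph.comp_congr (Λ : TopKGraph k Obj Mor) {x x' y y' : Mor}
    (hx : x = x') (hy : y = y') (h : Λ.s x = Λ.r y) (h' : Λ.s x' = Λ.r y') :
    Λ.comp x y h = Λ.comp x' y' h' := by
  subst hx; subst hy; rfl

lemma TopKGraph.factor_unique (Λ : TopKGraph k Obj Mor) {f g h g' h' : Mor}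
    (hgh : Λ.s g = Λ.r h) (hgh' : Λ.s g' = Λ.r h')
    (e1 : Λ.comp g h hgh = f) (e2 : Λ.comp g' h' hgh' = f) (hd : Λ.d g = Λ.d g') :
    g = g' ∧ h = h' := by
  have hdf : Λ.d f = Λ.d g + Λ.d h := by rw [← e1, Λ.d_comp]
  have hdf' : Λ.d g' + Λ.d h' = Λ.d g + Λ.d h := by
    rw [← Λ.d_comp g' h' hgh', e2, hdf]
  have hdh' : Λ.d h' = Λ.d h := by rw [hd] at hdf'; exact add_left_cancel hdf'
  obtain ⟨p, -, hu⟩ := Λ.factor f (Λ.d g) (Λ.d h) hdf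
  have u1 : (g, h) = p := hu (g, h) ⟨hgh, e1, rfl, rfl⟩
  have u2 : (g', h') = p := hu (g', h') ⟨hgh', e2, hd.symm, hdh'⟩
  have := u1.trans u2.symm
  exact ⟨congrArg Prod.fst this, congrArg Prod.snd this⟩

lemma TopKGraph.exists_factor (Λ : TopKGraph k Obj Mor) (f : Mor) (m n : Fin k → ℕ)
    (hf : Λ.d f = m + n) :
    ∃ (g h : Mor) (hs : Λ.s g = Λ.r h), Λ.comp g h hs = f ∧ Λ.d g = m ∧ Λ.d h = n := by
  obtain ⟨⟨g, h⟩, ⟨hs, hc, hm, hn⟩, -⟩ := Λ.factor f m n hf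
  exact ⟨g, h, hs, hc, hm, hn⟩

/-- If `f = x·g` and `f = h·γ` with `d x ≤ d h`, then `h` extends `x`. -/
lemma TopKGraph.factor_extend (Λ : TopKGraph k Obj Mor) {f x g h γ : Mor}
    (hx : Λ.s x = Λ.r g) (hf : Λ.comp x g hx = f)
    (hh : Λ.s h = Λ.r γ) (hfh : Λ.comp h γ hh = f) (hd : Λ.d x ≤ Λ.d h) :
    ∃ (α : Mor) (ha : Λ.s x = Λ.r α), Λ.comp x α ha = h := by
  have hdg : Λ.d g = (Λ.d h - Λ.d x) + Λ.d γ := by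
    have h1 : Λ.d x + Λ.d g = Λ.d h + Λ.d γ := by
      rw [← Λ.d_comp x g hx, ← Λ.d_comp h γ hh, hf, hfh]
    funext i
    have h2 := congrFun h1 i
    have h3 : Λ.d x i ≤ Λ.d h i := hd i
    simp only [Pi.add_apply, Pi.sub_apply] at *
    omega
  obtain ⟨g1, g2, hs12, hc12, hd1, hd2⟩ := Λ.exists_factor g (Λ.d h - Λ.d x) (Λ.d γ) hdg
  have hx1 : Λ.s x = Λ.r g1 := by rw [hx, ← hc12, Λ.r_comp]
  have hs1 : Λ.s (Λ.comp x g1 hx1) = Λ.r g2 := by rw [Λ.s_comp]; exact hs12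
  have hx2 : Λ.s x = Λ.r (Λ.comp g1 g2 hs12) := by rw [Λ.r_comp]; exact hx1
  have hcomp : Λ.comp (Λ.comp x g1 hx1) g2 hs1 = f :=
    (Λ.comp_assoc x g1 g2 hx1 hs12 hs1 hx2).trans ((Λ.comp_congr rfl hc12 hx2 hx).trans hf)
  have hdeq : Λ.d h = Λ.d (Λ.comp x g1 hx1) := by
    rw [Λ.d_comp, hd1]; funext i; have h9 : Λ.d x i ≤ Λ.d h i := hd i
    simp only [Pi.add_apply, Pi.sub_apply]; omega
  obtain ⟨heq, -⟩ := Λ.factor_unique hh hs1 hfh hcomp hdeq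
  exact ⟨g1, hx1, heq.symm⟩

/-- A common extension of `t` and `n` yields a minimal one. -/
lemma TopKGraph.minExt_nonempty (Λ : TopKGraph k Obj Mor) {t n g ct cn : Mor}
    (h1 : Λ.s t = Λ.r ct) (h2 : Λ.s n = Λ.r cn)
    (e1 : Λ.comp t ct h1 = g) (e2 : Λ.comp n cn h2 = g) :
    (MinExt Λ t n).Nonempty := by
  have hdg : Λ.d g = (Λ.d t ⊔ Λ.d n) + (Λ.d g - (Λ.d t ⊔ Λ.d n)) := by
    have ht : Λ.d t + Λ.d ct = Λ.d g := by rw [← Λ.d_comp t ct h1, e1]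
    have hn : Λ.d n + Λ.d cn = Λ.d g := by rw [← Λ.d_comp n cn h2, e2]
    funext i
    have h3 := congrFun ht i; have h4 := congrFun hn i
    simp only [Pi.add_apply, Pi.sup_apply, Pi.sub_apply] at *
    omega
  obtain ⟨h, δ, hsδ, hcδ, hdh, -⟩ := Λ.exists_factor g _ _ hdg
  obtain ⟨A, hA, hAc⟩ := Λ.factor_extend h1 e1 hsδ hcδ (by rw [hdh]; exact le_sup_left)
  obtain ⟨B, hB, hBc⟩ := Λ.factor_extend h2 e2 hsδ hcδ (by rw [hdh]; exact le_sup_right)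
  exact ⟨(A, B), hA, hB, hAc.trans hBc.symm, by rw [← Λ.d_comp t A hA, hAc, hdh]⟩

/-- `Ext(U; F)` is compact when `U, F` are compact of fixed degrees. -/
lemma extSet_isCompact_of_const (Λ : TopKGraph k Obj Mor) (hΛ : CompactlyAligned Λ)
    {U F : Set Mor} {m q : Fin k → ℕ} (hUc : IsCompact U) (hUd : U ⊆ {f | Λ.d f = m})
    (hFc : IsCompact F) (hFd : F ⊆ {f | Λ.d f = q}) :
    IsCompact (ExtSet Λ U F) := by
  classical
  set n : Fin k → ℕ := (m ⊔ q) - m with hn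
  have hmn : m + n = m ⊔ q := by
    funext i; simp only [hn, Pi.add_apply, Pi.sub_apply, Pi.sup_apply]; omega
  have hA : IsCompact (MCE Λ U F) := hΛ m q U F hUd hFd hUc hFc
  set P := {p : Mor × Mor // Λ.s p.1 = Λ.r p.2} with hP
  set C : P → Mor := fun p => Λ.comp p.1.1 p.1.2 p.2 with hC
  set O : Set P := {p | Λ.d p.1.1 = m ∧ Λ.d p.1.2 = n} with hO
  have hOopen : IsOpen O := by
    have hcont : Continuous fun p : P => (Λ.d p.1.1, Λ.d p.1.2) :=
      ((Λ.continuous_d.comp (continuous_fst.comp continuous_subtype_val)).prodMk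
        (Λ.continuous_d.comp (continuous_snd.comp continuous_subtype_val)))
    have : O = (fun p : P => (Λ.d p.1.1, Λ.d p.1.2)) ⁻¹' {(m, n)} := by
      ext p; simp [hO, Prod.ext_iff]
    rw [this]
    exact (isOpen_discrete {(m, n)}).preimage hcont
  have hecont : Continuous (O.restrict C) := Λ.continuous_comp.comp continuous_subtype_val
  have heopen : IsOpenMap (O.restrict C) := Λ.isOpenMap_comp.restrict hOopen
  have heinj : Function.Injective (O.restrict C) := by
    rintro p p' hpp
    obtain ⟨ea, eb⟩ := Λ.factor_unique p.1.2 p'.1.2 hpp rfl (p.2.1.trans p'.2.1.symm)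
    exact Subtype.ext (Subtype.ext (Prod.ext ea eb))
  have hemb := Topology.IsOpenEmbedding.of_continuous_injective_isOpenMap hecont heinj heopen
  have hrange : MCE Λ U F ⊆ Set.range (O.restrict C) := by
    rintro f ⟨σ, hσU, μ, hμF, hdf, ⟨a, ha, hac⟩, -⟩
    have hdfmn : Λ.d f = m + n := by
      rw [hmn, hdf, (hUd hσU : Λ.d σ = m), (hFd hμF : Λ.d μ = q)]
    obtain ⟨g, h, hs, hc, hdg, hdh⟩ := Λ.exists_factor f m n hdfmn
    exact ⟨⟨⟨(g, h), hs⟩, hdg, hdh⟩, hc⟩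
  have hK : IsCompact (O.restrict C ⁻¹' MCE Λ U F) :=
    hemb.isInducing.isCompact_preimage' hA hrange
  have him : ExtSet Λ U F = (fun p : O => p.1.1.2) '' (O.restrict C ⁻¹' MCE Λ U F) := by
    ext a
    constructor
    · rintro ⟨σ, hσU, μ, hμF, b, hb1, hb2, hbc, hbd⟩
      have hda : Λ.d a = n := by
        funext i
        have h5 := congrFun hbd i
        have h6 := congrFun (hUd hσU : Λ.d σ = m) i
        have h7 := congrFun (hFd hμF : Λ.d μ = q) i
        simp only [hn, Pi.add_apply, Pi.sup_apply, Pi.sub_apply] at *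
        omega
      have hfMCE : Λ.comp σ a hb1 ∈ MCE Λ U F :=
        ⟨σ, hσU, μ, hμF, by rw [Λ.d_comp]; exact hbd, ⟨a, hb1, rfl⟩, ⟨b, hb2, hbc.symm⟩⟩
      exact ⟨⟨⟨(σ, a), hb1⟩, hUd hσU, hda⟩, hfMCE, rfl⟩
    · rintro ⟨p, hp, rfl⟩
      obtain ⟨σ, hσU, μ, hμF, hdf, ⟨a', ha', hac'⟩, ⟨b, hb', hbc'⟩⟩ := hp
      obtain ⟨eσ, ea⟩ := Λ.factor_unique p.1.2 ha' rfl hac'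
        (p.2.1.trans (hUd hσU : Λ.d σ = m).symm)
      refine ⟨σ, hσU, μ, hμF, b, by rw [← eσ]; exact p.1.2, hb', ?_, ?_⟩
      · exact (Λ.comp_congr eσ.symm rfl _ p.1.2).trans hbc'.symm
      · rw [show Λ.d σ = m from hUd hσU, show Λ.d μ = q from hFd hμF, p.2.2, hmn]
  rw [him]
  exact hK.image ((Continuous.subtype_val continuous_subtype_val).snd)

end TKG


open TKG in
/-- For a compactly aligned `Λ`, `v ∈ Λ^0`, `λ ∈ vΛ`, `E ∈ vCE(Λ)` and any compact
neighbourhood `U ⊆ Λ^{d(λ)}` of `λ`, we have `Ext(U; E) ∈ s(λ)CE(Λ)`. -/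
theorem extSet_mem_CE
    {k : ℕ} {Obj Mor : Type} [TopologicalSpace Obj] [TopologicalSpace Mor]
    (Λ : TopKGraph k Obj Mor) (hΛ : CompactlyAligned Λ)
    (v : Obj) (l : Mor) (hl : Λ.r l = v) (E : Set Mor) (hE : E ∈ CE Λ v)
    (U : Set Mor) (hUc : IsCompact U) (hUd : U ⊆ {f | Λ.d f = Λ.d l})
    (hUn : U ∈ nhds l) :
    ExtSet Λ U E ∈ CE Λ (Λ.s l) := by
  classical
  obtain ⟨hEc, hEn, hEx⟩ := hE
  refine ⟨?_, ?_, ?_⟩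
  · -- compactness
    have hdE : (Λ.d '' E).Finite := (hEc.image Λ.continuous_d).finite ⟨inferInstance⟩
    have hsplit : ExtSet Λ U E = ⋃ q ∈ Λ.d '' E, ExtSet Λ U (E ∩ {f | Λ.d f = q}) := by
      ext a
      simp only [mem_iUnion, exists_prop]
      constructor
      · rintro ⟨σ, hσ, μ, hμ, b, hb⟩
        exact ⟨Λ.d μ, ⟨μ, hμ, rfl⟩, σ, hσ, μ, ⟨hμ, rfl⟩, b, hb⟩
      · rintro ⟨q, -, σ, hσ, μ, ⟨hμ, -⟩, b, hb⟩
        exact ⟨σ, hσ, μ, hμ, b, hb⟩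
    rw [hsplit]
    refine hdE.isCompact_biUnion fun q _ => ?_
    refine extSet_isCompact_of_const Λ hΛ hUc hUd ?_ inter_subset_right
    exact hEc.inter_right ((isClosed_discrete {q}).preimage Λ.continuous_d)
  · -- neighbourhood
    have hrE : Λ.r ⁻¹' (Λ.r '' E) ∈ nhds l :=
      Λ.continuous_r.continuousAt.preimage_mem_nhds (by rw [hl]; exact hEn)
    have hW : U ∩ Λ.r ⁻¹' (Λ.r '' E) ∈ nhds l := Filter.inter_mem hUn hrE
    rw [mem_nhds_iff]
    refine ⟨Λ.s '' interior (U ∩ Λ.r ⁻¹' (Λ.r '' E)), ?_,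
      Λ.isLocalHomeomorph_s.isOpenMap _ isOpen_interior,
      ⟨l, mem_interior_iff_mem_nhds.mpr hW, rfl⟩⟩
    rintro _ ⟨σ, hσ, rfl⟩
    have hσ' := interior_subset hσ
    obtain ⟨μ, hμ, ⟨⟨a, b⟩, h1, h2, hc, hd⟩⟩ := hEx σ hσ'.2
    exact ⟨a, ⟨σ, hσ'.1, μ, hμ, b, h1, h2, hc, hd⟩, h1.symm⟩
  · -- exhaustive
    intro τ hτ
    obtain ⟨a, ⟨σ, hσU, μ, hμE, b, h1, h2, hc, hd⟩, hra⟩ := hτ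
    have hστ : Λ.s σ = Λ.r τ := h1.trans hra
    have hrσμ : Λ.r σ = Λ.r μ := by
      have := congrArg Λ.r hc; rwa [Λ.r_comp, Λ.r_comp] at this
    obtain ⟨μ', hμ'E, ⟨⟨ζ, ξ⟩, hz1, hz2, hzc, hzd⟩⟩ :=
      hEx (Λ.comp σ τ hστ) (by rw [Λ.r_comp, hrσμ]; exact ⟨μ, hμE, rfl⟩)
    set f := Λ.comp (Λ.comp σ τ hστ) ζ hz1 with hfdef
    have hτζ : Λ.s τ = Λ.r ζ := by rw [← Λ.s_comp σ τ hστ]; exact hz1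
    have hsg : Λ.s σ = Λ.r (Λ.comp τ ζ hτζ) := by rw [Λ.r_comp]; exact hστ
    have hfg : Λ.comp σ (Λ.comp τ ζ hτζ) hsg = f :=
      (Λ.comp_assoc σ τ ζ hστ hτζ hz1 hsg).symm
    have hdf : Λ.d f = (Λ.d σ ⊔ Λ.d μ') + (Λ.d f - (Λ.d σ ⊔ Λ.d μ')) := by
      have h3 : Λ.d f = Λ.d σ + Λ.d τ + Λ.d ζ := by rw [hfdef, Λ.d_comp, Λ.d_comp]
      have h4 : Λ.d f = Λ.d μ' + Λ.d ξ := by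
        rw [hfdef, show Λ.comp (Λ.comp σ τ hστ) ζ hz1 = Λ.comp μ' ξ hz2 from hzc, Λ.d_comp]
      funext i
      have h5 := congrFun h3 i; have h6 := congrFun h4 i
      simp only [Pi.add_apply, Pi.sup_apply, Pi.sub_apply] at *
      omega
    obtain ⟨h, γ, hsγ, hcγ, hdh, -⟩ := Λ.exists_factor f _ _ hdf
    obtain ⟨α', hα', hα'c⟩ := Λ.factor_extend hsg hfg hsγ hcγ (by rw [hdh]; exact le_sup_left)
    obtain ⟨β', hβ', hβ'c⟩ := Λ.factor_extend hz2 hzc.symm hsγ hcγ (by rw [hdh]; exact le_sup_right)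
    have hα'mem : α' ∈ ExtSet Λ U E :=
      ⟨σ, hσU, μ', hμ'E, β', hα', hβ', hα'c.trans hβ'c.symm,
        by rw [← Λ.d_comp σ α' hα', hα'c, hdh]⟩
    have hsαγ : Λ.s α' = Λ.r γ := by rw [← Λ.s_comp σ α' hα', hα'c]; exact hsγ
    have hsg2 : Λ.s σ = Λ.r (Λ.comp α' γ hsαγ) := by rw [Λ.r_comp]; exact hα'
    have hfc2 : Λ.comp σ (Λ.comp α' γ hsαγ) hsg2 = f :=
      (Λ.comp_assoc σ α' γ hα' hsαγ (by rw [Λ.s_comp]; exact hsαγ) hsg2).symm.trans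
        ((Λ.comp_congr hα'c rfl _ hsγ).trans hcγ)
    obtain ⟨-, hgeq⟩ := Λ.factor_unique hsg hsg2 hfg hfc2 rfl
    exact ⟨α', hα'mem, Λ.minExt_nonempty hτζ hsαγ hgeq rfl⟩
end

section
/- For a compactly aligned topological k-graph Λ: if x ∈ ∂Λ, m ∈ ℕ^k with m ≤ d(x), and λ ∈ Λ with s(λ) = r(x), then both σ^m x and λx are boundary paths. Consequently ∂Λ is an invariant subset of the unit space of G_Λ. -/
open Set

namespace TKG

variable {k : ℕ} {Obj Mor : Type} [TopologicalSpace Obj] [TopologicalSpace Mor]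
variable {Λ : TopKGraph k Obj Mor}

private lemma enat_le_sub_iff {a c : ℕ} {b : ℕ∞} (hab : (a : ℕ∞) ≤ b) :
    (c : ℕ∞) ≤ b - a ↔ ((a + c : ℕ) : ℕ∞) ≤ b := by
  induction b using ENat.recTopCoe with
  | top => simp
  | coe n =>
    have hab' : a ≤ n := by exact_mod_cast hab
    rw [← ENat.coe_sub, Nat.cast_le, Nat.cast_le]
    omega

private lemma enat_add_sub_cancel {a : ℕ} {b : ℕ∞} (hab : (a : ℕ∞) ≤ b) :
    (a : ℕ∞) + (b - a) = b := by
  induction b using ENat.recTopCoe with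
  | top => simp
  | coe n =>
    have hab' : a ≤ n := by exact_mod_cast hab
    rw [← ENat.coe_sub, ← Nat.cast_add]
    exact congrArg _ (by omega)

private lemma enat_sub_le_sub {a c : ℕ} {b : ℕ∞} (h : (c : ℕ∞) ≤ b) :
    ((c - a : ℕ) : ℕ∞) ≤ b - a := by
  induction b using ENat.recTopCoe with
  | top => simp
  | coe n =>
    have hc : c ≤ n := by exact_mod_cast h
    rw [← ENat.coe_sub, Nat.cast_le]
    omega

lemma comp_injective {a b a' b' : Mor} (h : Λ.s a = Λ.r b) (h' : Λ.s a' = Λ.r b')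
    (heq : Λ.comp a b h = Λ.comp a' b' h') (hd : Λ.d a = Λ.d a') :
    a = a' ∧ b = b' := by
  have hdc := Λ.d_comp a b h
  have hdc' := Λ.d_comp a' b' h'
  have hdb : Λ.d b = Λ.d b' := by
    funext i
    have e1 := congrFun hdc i
    have e2 := congrFun hdc' i
    rw [heq] at e1
    have e3 := congrFun hd i
    simp only [Pi.add_apply] at e1 e2
    omega
  obtain ⟨gh, -, huniq⟩ := Λ.factor (Λ.comp a b h) (Λ.d a) (Λ.d b) hdc
  have e1 := huniq (a, b) ⟨h, rfl, rfl, rfl⟩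
  have e2 := huniq (a', b') ⟨h', heq.symm, hd.symm, hdb.symm⟩
  have := e1.trans e2.symm
  exact ⟨congrArg Prod.fst this, congrArg Prod.snd this⟩

lemma exists_split {f : Mor} {p : Fin k → ℕ} (hp : p ≤ Λ.d f) :
    ∃ (a b : Mor) (h : Λ.s a = Λ.r b), Λ.comp a b h = f ∧ Λ.d a = p ∧ Λ.d b = Λ.d f - p := by
  obtain ⟨⟨a, b⟩, ⟨h, hc, hda, hdb⟩, -⟩ :=
    Λ.factor f p (Λ.d f - p) (funext fun i => by have hi : p i ≤ Λ.d f i := hp i; simp only [Pi.add_apply, Pi.sub_apply]; omega)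
  exact ⟨a, b, h, hc, hda, hdb⟩

namespace KPath

variable {x : KPath Λ}

lemma dom_mono {p q : Fin k → ℕ} (hpq : p ≤ q) (hq : x.dom q) : x.dom p :=
  fun i => le_trans (by exact_mod_cast hpq i) (hq i)

lemma dom_zero : x.dom 0 := fun i => by simp

lemma r_seg {p q : Fin k → ℕ} (hpq : p ≤ q) (hq : x.dom q) :
    Λ.r (x.seg p q) = x.vtx p := by
  obtain ⟨h, -⟩ := x.seg_comp p p q le_rfl hpq hq
  rw [x.seg_ident p (dom_mono hpq hq), Λ.s_ident] at h
  exact h.symm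

lemma s_seg {p q : Fin k → ℕ} (hpq : p ≤ q) (hq : x.dom q) :
    Λ.s (x.seg p q) = x.vtx q := by
  obtain ⟨h, -⟩ := x.seg_comp p q q hpq le_rfl hq
  exact h

lemma seg_split {p q u : Fin k → ℕ} (hpq : p ≤ q) (hqu : q ≤ u) (hu : x.dom u)
    {a b : Mor} {h : Λ.s a = Λ.r b} (hc : Λ.comp a b h = x.seg p u)
    (hda : Λ.d a = q - p) : a = x.seg p q ∧ b = x.seg q u := by
  obtain ⟨h', hc'⟩ := x.seg_comp p q u hpq hqu hu
  exact comp_injective h h' (hc.trans hc'.symm)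
    (hda.trans (x.d_seg p q hpq (dom_mono hqu hu)).symm)

end KPath

lemma shift_boundary {x : KPath Λ} (hx : IsBoundary x) {m : Fin k → ℕ}
    {y : KPath Λ} (hsh : IsShiftOf m x y) : IsBoundary y := by
  obtain ⟨hm', hdeg, hseg⟩ := hsh
  intro n hn E hE
  have hxmn : x.dom (m + n) := by
    intro i
    have h1 := hn i
    rw [hdeg i] at h1
    have := (enat_le_sub_iff (hm' i)).mp h1
    simpa using this
  have hv : y.vtx n = x.vtx (m + n) := by
    unfold KPath.vtx; rw [hseg n n le_rfl hn]
  obtain ⟨l, hlE, hdom, hsegl⟩ := hx (m + n) hxmn E (hv ▸ hE)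
  refine ⟨l, hlE, ?_, ?_⟩
  · intro i
    have h1 := hdom i
    rw [hdeg i]
    refine (enat_le_sub_iff (hm' i)).mpr ?_
    simpa [add_assoc] using h1
  · have := hseg n (n + Λ.d l) (fun i => Nat.le_add_right _ _) (by
      intro i
      have h1 := hdom i
      rw [hdeg i]
      refine (enat_le_sub_iff (hm' i)).mpr ?_
      simpa [add_assoc] using h1)
    rw [this, ← add_assoc]
    exact hsegl


private lemma enat_le_coe_add_iff {a c : ℕ} {b : ℕ∞} (hac : a ≤ c) :
    (c : ℕ∞) ≤ (a : ℕ∞) + b ↔ ((c - a : ℕ) : ℕ∞) ≤ b := by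
  induction b using ENat.recTopCoe with
  | top => simp
  | coe n => rw [← Nat.cast_add, Nat.cast_le, Nat.cast_le]; omega

lemma comp_congr {a b b' : Mor} (h : Λ.s a = Λ.r b) (e : b = b') :
    Λ.comp a b h = Λ.comp a b' (e ▸ h) := by subst e; rfl

lemma comp_assoc'' {f g h : Mor} (hfg : Λ.s f = Λ.r g) (hgh : Λ.s g = Λ.r h) :
    ∃ (h1 : Λ.s (Λ.comp f g hfg) = Λ.r h) (h2 : Λ.s f = Λ.r (Λ.comp g h hgh)),
      Λ.comp (Λ.comp f g hfg) h h1 = Λ.comp f (Λ.comp g h hgh) h2 := by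
  have h1 : Λ.s (Λ.comp f g hfg) = Λ.r h := by rw [Λ.s_comp]; exact hgh
  have h2 : Λ.s f = Λ.r (Λ.comp g h hgh) := by rw [Λ.r_comp]; exact hfg
  exact ⟨h1, h2, Λ.comp_assoc f g h hfg hgh h1 h2⟩

section Concat

variable {l : Mor} {x y : KPath Λ} (hcon : IsConcatOf l x y)
include hcon

lemma concat_dom_ge : y.dom (Λ.d l) := by
  intro i
  rw [hcon.2.1 i]
  exact le_self_add

lemma concat_dom_iff {p : Fin k → ℕ} (hp : Λ.d l ≤ p) :
    y.dom p ↔ x.dom (p - Λ.d l) := by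
  unfold KPath.dom
  refine forall_congr' fun i => ?_
  rw [hcon.2.1 i]
  exact enat_le_coe_add_iff (hp i)

lemma concat_seg {p q : Fin k → ℕ} (hlp : Λ.d l ≤ p) (hpq : p ≤ q) (hq : y.dom q) :
    y.seg p q = x.seg (p - Λ.d l) (q - Λ.d l) ∧
      (∃ h : Λ.s l = Λ.r (x.seg 0 (p - Λ.d l)),
        Λ.comp l (x.seg 0 (p - Λ.d l)) h = y.seg 0 p) := by
  have hxq : x.dom (q - Λ.d l) := (concat_dom_iff hcon (hlp.trans hpq)).mp hq
  have hsub : p - Λ.d l ≤ q - Λ.d l := fun i => by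
    have hh : p i ≤ q i := hpq i; simp only [Pi.sub_apply]; omega
  obtain ⟨h1, e1⟩ := hcon.2.2.2 q (hlp.trans hpq) hq
  obtain ⟨h2, e2⟩ := x.seg_comp 0 (p - Λ.d l) (q - Λ.d l) zero_le hsub hxq
  obtain ⟨h3, e3⟩ := hcon.2.2.2 p hlp (KPath.dom_mono hpq hq)
  obtain ⟨H1, H2, Hass⟩ := comp_assoc'' (f := l) h3 h2
  have hB : Λ.comp (Λ.comp l (x.seg 0 (p - Λ.d l)) h3) (x.seg (p - Λ.d l) (q - Λ.d l)) H1
      = y.seg 0 q := by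
    rw [Hass]
    exact (comp_congr (Λ := Λ) H2 e2).trans (e1.symm ▸ rfl)
  have hdeg : Λ.d (Λ.comp l (x.seg 0 (p - Λ.d l)) h3) = p - 0 := by
    rw [Λ.d_comp, x.d_seg 0 (p - Λ.d l) zero_le (KPath.dom_mono hsub hxq)]
    funext i
    have hh : Λ.d l i ≤ p i := hlp i
    simp only [Pi.add_apply, Pi.sub_apply, Pi.zero_apply]
    omega
  obtain ⟨ha, hb⟩ := y.seg_split zero_le hpq hq hB hdeg
  exact ⟨hb.symm, ⟨h3, ha ▸ e3.symm ▸ rfl⟩⟩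

lemma concat_vtx {p : Fin k → ℕ} (hlp : Λ.d l ≤ p) (hp : y.dom p) :
    y.vtx p = x.vtx (p - Λ.d l) := by
  unfold KPath.vtx
  rw [(concat_seg hcon hlp le_rfl hp).1]

end Concat

lemma shift_concat {q : Fin k → ℕ} {y z : KPath Λ} (hsh : IsShiftOf q y z) :
    IsConcatOf (y.seg 0 q) z y := by
  obtain ⟨hq, hdeg, hseg⟩ := hsh
  have hdl : Λ.d (y.seg 0 q) = q := by
    rw [y.d_seg 0 q zero_le hq]
    funext i; simp only [Pi.sub_apply, Pi.zero_apply, Nat.sub_zero]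
  have hz00 : z.seg 0 0 = y.seg q q := by
    have := hseg 0 0 le_rfl (KPath.dom_zero)
    rwa [add_zero] at this
  refine ⟨?_, ?_, ?_, ?_⟩
  · rw [KPath.s_seg zero_le hq]
    unfold KPath.rng KPath.vtx
    rw [hz00]
  · intro i
    rw [hdl, hdeg i]
    exact (enat_add_sub_cancel (hq i)).symm
  · intro p hp
    rw [hdl] at hp
    obtain ⟨h, hc⟩ := y.seg_comp 0 p q zero_le hp hq
    refine ⟨y.seg p q, h, ?_, hc⟩
    rw [y.d_seg 0 p zero_le (KPath.dom_mono hp hq)]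
    funext i; simp only [Pi.sub_apply, Pi.zero_apply, Nat.sub_zero]
  · intro p hqp hpdom
    rw [hdl] at hqp ⊢
    have hzd : z.dom (p - q) := fun i => by
      rw [hdeg i]
      exact enat_sub_le_sub (hpdom i)
    have hep : q + (p - q) = p := funext fun i => by
      have hh : q i ≤ p i := hqp i; simp only [Pi.add_apply, Pi.sub_apply]; omega
    have hzseg : z.seg 0 (p - q) = y.seg q p := by
      rw [hseg 0 (p - q) zero_le hzd, add_zero, hep]
    obtain ⟨h, hc⟩ := y.seg_comp 0 q p zero_le hqp hpdom
    exact ⟨hzseg ▸ h, hc.symm.trans (comp_congr h hzseg.symm)⟩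

private lemma isOpen_deg (Λ : TopKGraph k Obj Mor) (p : Fin k → ℕ) :
    IsOpen {f : Mor | Λ.d f = p} :=
  (isOpen_discrete ({p} : Set (Fin k → ℕ))).preimage Λ.continuous_d

private lemma isClosed_deg (Λ : TopKGraph k Obj Mor) (p : Fin k → ℕ) :
    IsClosed {f : Mor | Λ.d f = p} :=
  (isClosed_discrete ({p} : Set (Fin k → ℕ))).preimage Λ.continuous_d

lemma tail_compact (Λ : TopKGraph k Obj Mor) {p q : Fin k → ℕ} {V C : Set Mor}
    (hV : ∀ ν ∈ V, Λ.d ν = p) (hVc : IsCompact V) (hC : IsCompact C)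
    (hCd : ∀ f ∈ C, Λ.d f = p + q) :
    IsCompact {α : Mor | ∃ ν ∈ V, ∃ h : Λ.s ν = Λ.r α, Λ.d α = q ∧ Λ.comp ν α h ∈ C} := by
  haveI := Λ.t2Mor
  classical
  let D := {νa : Mor × Mor // Λ.s νa.1 = Λ.r νa.2 ∧ Λ.d νa.1 = p ∧ Λ.d νa.2 = q}
  let T := {f : Mor // Λ.d f = p + q}
  let c' : D → T := fun x => ⟨Λ.comp x.1.1 x.1.2 x.2.1, by rw [Λ.d_comp, x.2.2.1, x.2.2.2]⟩
  have hinj : Function.Injective c' := by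
    intro x y hxy
    obtain ⟨e1, e2⟩ := comp_injective x.2.1 y.2.1 (congrArg Subtype.val hxy)
      (x.2.2.1.trans y.2.2.1.symm)
    exact Subtype.ext (Prod.ext e1 e2)
  have hsurj : Function.Surjective c' := by
    intro f
    have hple : p ≤ Λ.d f.1 := by rw [f.2]; exact le_self_add
    obtain ⟨a, b, h, hc, hda, hdb⟩ := exists_split hple
    have hdb' : Λ.d b = q := by
      rw [hdb, f.2]; funext i; simp only [Pi.sub_apply, Pi.add_apply]; omega
    exact ⟨⟨(a, b), h, hda, hdb'⟩, Subtype.ext hc⟩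
  have hcont : Continuous c' := by
    refine Continuous.subtype_mk ?_ _
    have hj : Continuous (fun x : D => (⟨x.1, x.2.1⟩ : {y : Mor × Mor // Λ.s y.1 = Λ.r y.2})) :=
      Continuous.subtype_mk continuous_subtype_val _
    exact Λ.continuous_comp.comp hj
  have hopen : IsOpenMap c' := by
    intro O hO
    obtain ⟨O₁, hO₁, rfl⟩ := isOpen_induced_iff.mp hO
    let OS : Set {y : Mor × Mor // Λ.s y.1 = Λ.r y.2} :=
      Subtype.val ⁻¹' (O₁ ∩ (Λ.d ∘ Prod.fst) ⁻¹' {p} ∩ (Λ.d ∘ Prod.snd) ⁻¹' {q})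
    have hOS : IsOpen OS := by
      refine IsOpen.preimage continuous_subtype_val ?_
      refine IsOpen.inter (IsOpen.inter hO₁ ?_) ?_
      · exact (isOpen_discrete _).preimage (Λ.continuous_d.comp continuous_fst)
      · exact (isOpen_discrete _).preimage (Λ.continuous_d.comp continuous_snd)
    have hW : IsOpen ((fun y : {y : Mor × Mor // Λ.s y.1 = Λ.r y.2} =>
        Λ.comp y.1.1 y.1.2 y.2) '' OS) := Λ.isOpenMap_comp OS hOS
    rw [isOpen_induced_iff]
    refine ⟨_, hW, ?_⟩
    ext f
    constructor
    · rintro hf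
      obtain ⟨y, hyOS, hyf⟩ := hf
      refine ⟨⟨(y.1.1, y.1.2), y.2, hyOS.1.2, hyOS.2⟩, hyOS.1.1, ?_⟩
      exact Subtype.ext hyf
    · rintro ⟨x, hxO, rfl⟩
      exact ⟨⟨x.1, x.2.1⟩, ⟨⟨hxO, x.2.2.1⟩, x.2.2.2⟩, rfl⟩
  let homeo : D ≃ₜ T :=
    (Equiv.ofBijective c' ⟨hinj, hsurj⟩).toHomeomorphOfContinuousOpen hcont hopen
  have hpre : IsCompact ((Subtype.val : T → Mor) ⁻¹' C) :=
    (Topology.IsClosedEmbedding.subtypeVal (isClosed_deg Λ (p + q))).isCompact_preimage hC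
  have hK : IsCompact (c' ⁻¹' (Subtype.val ⁻¹' C) ∩ ((fun x : D => x.1.1) ⁻¹' V)) := by
    refine IsCompact.inter_right ?_ ?_
    · exact homeo.isCompact_preimage.mpr hpre
    · exact (hVc.isClosed.preimage (continuous_fst.comp continuous_subtype_val))
  have himg : {α : Mor | ∃ ν ∈ V, ∃ h : Λ.s ν = Λ.r α, Λ.d α = q ∧ Λ.comp ν α h ∈ C}
      = (fun x : D => x.1.2) '' (c' ⁻¹' (Subtype.val ⁻¹' C) ∩ ((fun x : D => x.1.1) ⁻¹' V)) := by
    ext α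
    constructor
    · rintro ⟨ν, hν, h, hdα, hcomp⟩
      exact ⟨⟨(ν, α), h, hV ν hν, hdα⟩, ⟨hcomp, hν⟩, rfl⟩
    · rintro ⟨x, ⟨hxC, hxV⟩, rfl⟩
      exact ⟨x.1.1, hxV, x.2.1, x.2.2.2, hxC⟩
  rw [himg]
  exact hK.image (continuous_snd.comp continuous_subtype_val)

lemma exists_extCE (hΛ : CompactlyAligned Λ) {v : Obj} {E : Set Mor} (hE : E ∈ CE Λ v)
    (μ : Mor) (hrμ : Λ.r μ = v) :
    ∃ F ∈ CE Λ (Λ.s μ), ∀ α ∈ F, Λ.r α = Λ.s μ → ∃ l ∈ E, ∃ β, (α, β) ∈ MinExt Λ μ l := by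
  haveI := Λ.t2Mor
  haveI := Λ.locallyCompactMor
  obtain ⟨hEc, hEn, hEx⟩ := hE
  obtain ⟨O, hOsub, hOopen, hvO⟩ := mem_nhds_iff.mp hEn
  obtain ⟨e, hμe, hse⟩ := Λ.isLocalHomeomorph_s μ
  have hWopen : IsOpen (e.source ∩ Λ.r ⁻¹' O ∩ {f : Mor | Λ.d f = Λ.d μ}) :=
    (e.open_source.inter (hOopen.preimage Λ.continuous_r)).inter (isOpen_deg Λ (Λ.d μ))
  have hμW : μ ∈ e.source ∩ Λ.r ⁻¹' O ∩ {f : Mor | Λ.d f = Λ.d μ} :=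
    ⟨⟨hμe, show Λ.r μ ∈ O by rw [hrμ]; exact hvO⟩, rfl⟩
  obtain ⟨V, hVnhd, hVW, hVc⟩ := local_compact_nhds (hWopen.mem_nhds hμW)
  have hVd : ∀ ν ∈ V, Λ.d ν = Λ.d μ := fun ν hν => (hVW hν).2
  have hVO : ∀ ν ∈ V, Λ.r ν ∈ O := fun ν hν => (hVW hν).1.2
  refine ⟨{α : Mor | ∃ ν ∈ V, ∃ lE ∈ E, ∃ β, (α, β) ∈ MinExt Λ ν lE}, ⟨?_, ?_, ?_⟩, ?_⟩
  · -- compactness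
    have hdE : (Λ.d '' E).Finite := (hEc.image Λ.continuous_d).finite_of_discrete
    have hFunion : {α : Mor | ∃ ν ∈ V, ∃ lE ∈ E, ∃ β, (α, β) ∈ MinExt Λ ν lE}
        = ⋃ q ∈ Λ.d '' E,
          {α : Mor | ∃ ν ∈ V, ∃ h : Λ.s ν = Λ.r α,
            Λ.d α = (Λ.d μ ⊔ q) - Λ.d μ ∧ Λ.comp ν α h ∈ MCE Λ V (E ∩ {f | Λ.d f = q})} := by
      ext α
      simp only [Set.mem_setOf_eq, Set.mem_iUnion]
      constructor
      · rintro ⟨ν, hν, lE, hlE, β, h1, h2, heq, hd⟩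
        refine ⟨Λ.d lE, ⟨lE, hlE, rfl⟩, ν, hν, h1, ?_, ?_⟩
        · funext i
          have h3 := congrFun hd i
          have h4 := congrFun (hVd ν hν) i
          simp only [Pi.add_apply, Pi.sup_apply, Pi.sub_apply] at h3 ⊢
          omega
        · refine ⟨ν, hν, lE, ⟨hlE, rfl⟩, ?_, ⟨α, h1, rfl⟩, ⟨β, h2, heq.symm⟩⟩
          rw [Λ.d_comp]; exact hd
      · rintro ⟨q, ⟨lE0, hlE0, rfl⟩, ν, hν, h, hdα, hmem⟩
        obtain ⟨ν', hν', lE, ⟨hlE, hdlE⟩, hdf, -, ⟨β, h2, hβ⟩⟩ := hmem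
        refine ⟨ν, hν, lE, hlE, β, h, h2, hβ.symm, ?_⟩
        funext i
        have e1 := congrFun hdα i
        have e2 := congrFun (hVd ν hν) i
        have e3 : Λ.d lE i = Λ.d lE0 i := congrFun hdlE i
        simp only [Pi.add_apply, Pi.sup_apply, Pi.sub_apply] at e1 ⊢
        omega
    rw [hFunion]
    refine hdE.isCompact_biUnion fun q _ => ?_
    have hEq : IsCompact (E ∩ {f | Λ.d f = q}) := hEc.inter_right (isClosed_deg Λ q)
    have hMCE : IsCompact (MCE Λ V (E ∩ {f | Λ.d f = q})) :=
      hΛ (Λ.d μ) q V (E ∩ {f | Λ.d f = q}) (fun f hf => hVd f hf) (fun f hf => hf.2) hVc hEq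
    refine tail_compact Λ hVd hVc hMCE ?_
    rintro f ⟨lV, hlV, mE, hmE, hdf, -⟩
    rw [hdf]
    funext i
    have e2 := congrFun (hVd lV hlV) i
    have e3 : Λ.d mE i = q i := congrFun hmE.2 i
    simp only [Pi.add_apply, Pi.sup_apply, Pi.sub_apply]
    omega
  · -- neighbourhood
    rw [mem_nhds_iff]
    refine ⟨Λ.s '' interior V, ?_, Λ.isLocalHomeomorph_s.isOpenMap _ isOpen_interior,
      ⟨μ, mem_interior_iff_mem_nhds.mpr hVnhd, rfl⟩⟩
    rintro w ⟨ν, hνint, rfl⟩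
    have hν : ν ∈ V := interior_subset hνint
    obtain ⟨lE, hlE, ⟨⟨α, β⟩, h1, h2, heq, hd⟩⟩ := hEx ν (hOsub (hVO ν hν))
    exact ⟨α, ⟨ν, hν, lE, hlE, β, h1, h2, heq, hd⟩, h1.symm⟩
  · -- exhaustive
    intro τ hτ
    obtain ⟨α₀, hα₀F, hrα₀⟩ := hτ
    obtain ⟨ν₀, hν₀V, l₀, hl₀E, β₀, h01, -, -, -⟩ := hα₀F
    have hν₀τ : Λ.s ν₀ = Λ.r τ := h01.trans hrα₀
    have hrg : Λ.r (Λ.comp ν₀ τ hν₀τ) ∈ Λ.r '' E := hOsub (by rw [Λ.r_comp]; exact hVO ν₀ hν₀V)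
    obtain ⟨lE, hlE, ⟨⟨a, b⟩, hg1, hg2, heqg, hdg⟩⟩ := hEx (Λ.comp ν₀ τ hν₀τ) hrg
    have hτa : Λ.s τ = Λ.r a := (Λ.s_comp ν₀ τ hν₀τ).symm.trans hg1
    obtain ⟨H1, H2, Hass⟩ := comp_assoc'' hν₀τ hτa
    have hf : Λ.comp ν₀ (Λ.comp τ a hτa) H2 = Λ.comp lE b hg2 := Hass.symm.trans heqg
    have hg_d : Λ.d (Λ.comp ν₀ τ hν₀τ) = Λ.d ν₀ + Λ.d τ := Λ.d_comp ν₀ τ hν₀τ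
    have key : ∀ i, Λ.d ν₀ i + Λ.d τ i + Λ.d a i = max (Λ.d ν₀ i + Λ.d τ i) (Λ.d lE i) := by
      intro i
      have h3 := congrFun hdg i
      rw [hg_d] at h3
      simpa only [Pi.add_apply, Pi.sup_apply] using h3
    have hdb : ∀ i, Λ.d lE i + Λ.d b i = Λ.d ν₀ i + Λ.d τ i + Λ.d a i := by
      intro i
      have h3 := congrFun (congrArg Λ.d heqg) i
      simp only [Λ.d_comp, hg_d, Pi.add_apply] at h3
      omega
    have hdw : Λ.d (Λ.comp τ a hτa) = Λ.d τ + Λ.d a := Λ.d_comp τ a hτa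
    set P := Λ.d ν₀ ⊔ Λ.d lE with hPdef
    have hPapp : ∀ i, P i = max (Λ.d ν₀ i) (Λ.d lE i) := fun i => by
      simp [hPdef, Pi.sup_apply]
    have hPA : P - Λ.d ν₀ ≤ Λ.d (Λ.comp τ a hτa) := by
      intro i
      rw [hdw]
      have h1 := key i
      have h2 := hPapp i
      simp only [Pi.sub_apply, Pi.add_apply]
      omega
    obtain ⟨α', w₂, hα'w, hw_eq, hdα', hdw₂⟩ := exists_split hPA
    have hν₀α' : Λ.s ν₀ = Λ.r α' := H2.trans (by rw [← hw_eq, Λ.r_comp])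
    obtain ⟨H3, H4, Hass2⟩ := comp_assoc'' hν₀α' hα'w
    have hf2 : Λ.comp (Λ.comp ν₀ α' hν₀α') w₂ H3 = Λ.comp lE b hg2 := by
      rw [Hass2]
      exact (comp_congr H4 hw_eq).trans hf
    have hPL : P - Λ.d lE ≤ Λ.d b := by
      intro i
      have h1 := key i
      have h2 := hdb i
      have h3 := hPapp i
      simp only [Pi.sub_apply]
      omega
    obtain ⟨β', b₂, hβ'b, hb_eq, hdβ', hdb₂⟩ := exists_split hPL
    have hlβ' : Λ.s lE = Λ.r β' := hg2.trans (by rw [← hb_eq, Λ.r_comp])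
    obtain ⟨H5, H6, Hass3⟩ := comp_assoc'' hlβ' hβ'b
    have hf3 : Λ.comp (Λ.comp lE β' hlβ') b₂ H5 = Λ.comp (Λ.comp ν₀ α' hν₀α') w₂ H3 := by
      rw [Hass3]
      exact (comp_congr H6 hb_eq).trans hf2.symm
    obtain ⟨hcommon, -⟩ := comp_injective H5 H3 hf3 (by
      rw [Λ.d_comp, Λ.d_comp, hdβ', hdα']
      funext i
      have h3 := hPapp i
      simp only [Pi.add_apply, Pi.sub_apply]
      omega)
    have hminν₀ : (α', β') ∈ MinExt Λ ν₀ lE := by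
      refine ⟨hν₀α', hlβ', hcommon.symm, ?_⟩
      rw [hdα']
      funext i
      have h3 := hPapp i
      simp only [Pi.add_apply, Pi.sub_apply, Pi.sup_apply]
      omega
    refine ⟨α', ⟨ν₀, hν₀V, lE, hlE, β', hminν₀⟩, ?_⟩
    set Q := Λ.d τ ⊔ (P - Λ.d ν₀) with hQdef
    have hQapp : ∀ i, Q i = max (Λ.d τ i) (P i - Λ.d ν₀ i) := fun i => by
      simp [hQdef, Pi.sup_apply, Pi.sub_apply]
    have hQT : Q - Λ.d τ ≤ Λ.d a := by
      intro i
      have h1 := key i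
      have h2 := hPapp i
      have h3 := hQapp i
      simp only [Pi.sub_apply]
      omega
    obtain ⟨a₂, a₃, ha₂₃, ha_eq, hda₂, -⟩ := exists_split hQT
    have hτa₂ : Λ.s τ = Λ.r a₂ := hτa.trans (by rw [← ha_eq, Λ.r_comp])
    obtain ⟨H7, H8, Hass4⟩ := comp_assoc'' hτa₂ ha₂₃
    have hw_fact1 : Λ.comp (Λ.comp τ a₂ hτa₂) a₃ H7 = Λ.comp τ a hτa := by
      rw [Hass4]
      exact comp_congr H8 ha_eq
    have hQPA : Q - (P - Λ.d ν₀) ≤ Λ.d w₂ := by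
      intro i
      have h1 := key i
      have h2 := hPapp i
      have h3 := hQapp i
      have h5 := congrFun hdw₂ i
      rw [hdw] at h5
      simp only [Pi.sub_apply, Pi.add_apply] at h5 ⊢
      omega
    obtain ⟨c₂, c₃, hc₂₃, hc_eq, hdc₂, -⟩ := exists_split hQPA
    have hα'c₂ : Λ.s α' = Λ.r c₂ := hα'w.trans (by rw [← hc_eq, Λ.r_comp])
    obtain ⟨H9, H10, Hass5⟩ := comp_assoc'' hα'c₂ hc₂₃
    have hw_fact2 : Λ.comp (Λ.comp α' c₂ hα'c₂) c₃ H9 = Λ.comp τ a hτa := by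
      rw [Hass5]
      exact (comp_congr H10 hc_eq).trans hw_eq
    obtain ⟨hcommon2, -⟩ := comp_injective H7 H9 (hw_fact1.trans hw_fact2.symm) (by
      rw [Λ.d_comp, Λ.d_comp, hda₂, hdα', hdc₂]
      funext i
      have h2 := hPapp i
      have h3 := hQapp i
      simp only [Pi.add_apply, Pi.sub_apply]
      omega)
    refine ⟨(a₂, c₂), hτa₂, hα'c₂, hcommon2, ?_⟩
    rw [hda₂, hdα']
    funext i
    have h2 := hPapp i
    have h3 := hQapp i
    simp only [Pi.add_apply, Pi.sub_apply, Pi.sup_apply]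
    omega
  · -- extensions of μ itself
    rintro α ⟨ν, hν, lE, hlE, β, h1, h2, heq, hd⟩ hrα
    have hsν : Λ.s ν = Λ.s μ := h1.trans hrα
    have hνμ : ν = μ := by
      rw [hse] at hsν
      exact e.injOn (hVW hν).1.1 hμe hsν
    subst hνμ
    exact ⟨lE, hlE, β, h1, h2, heq, hd⟩

lemma concat_boundary (hΛ : CompactlyAligned Λ) {x : KPath Λ} (hx : IsBoundary x)
    {l : Mor} {y : KPath Λ} (hcon : IsConcatOf l x y) : IsBoundary y := by
  intro m hm E hE
  set n := m ⊔ Λ.d l with hn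
  have hmn : m ≤ n := le_sup_left
  have hln : Λ.d l ≤ n := le_sup_right
  have hyn : y.dom n := by
    intro i
    have h1 : n i = max (m i) (Λ.d l i) := by simp [hn, Pi.sup_apply]
    rcases max_cases (m i) (Λ.d l i) with ⟨he, -⟩ | ⟨he, -⟩ <;> rw [h1, he]
    · exact hm i
    · exact concat_dom_ge hcon i
  have hxn : x.dom (n - Λ.d l) := (concat_dom_iff hcon hln).mp hyn
  have hrμ : Λ.r (y.seg m n) = y.vtx m := KPath.r_seg hmn hyn
  have hsμ : Λ.s (y.seg m n) = x.vtx (n - Λ.d l) := by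
    rw [KPath.s_seg hmn hyn]
    exact concat_vtx hcon hln hyn
  obtain ⟨F, hF, hFspec⟩ := exists_extCE hΛ hE (y.seg m n) hrμ
  obtain ⟨α, hαF, hdomα, hsegα⟩ := hx (n - Λ.d l) hxn F (hsμ ▸ hF)
  have hrα : Λ.r α = Λ.s (y.seg m n) := by
    rw [← hsegα, KPath.r_seg (q := (n - Λ.d l) + Λ.d α) (fun i => Nat.le_add_right _ _) hdomα, hsμ]
  obtain ⟨l', hl'E, β, h1, h2, heq, hdsum⟩ := hFspec α hαF hrα
  have hdμ : Λ.d (y.seg m n) = n - m := y.d_seg m n hmn hyn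
  set u := n + Λ.d α with hu
  have hsubeq : u - Λ.d l = (n - Λ.d l) + Λ.d α := funext fun i => by
    have hh : Λ.d l i ≤ n i := hln i
    simp only [Pi.sub_apply, Pi.add_apply, hu]; omega
  have hyu : y.dom u := by
    rw [concat_dom_iff hcon (le_trans hln le_self_add), hsubeq]
    exact hdomα
  have hnu : n ≤ u := fun i => Nat.le_add_right _ _
  have hev : y.seg n u = α := by
    rw [(concat_seg hcon hln hnu hyu).1, hsubeq, hsegα]
  obtain ⟨hμα, hcμα⟩ := y.seg_comp m n u hmn hnu hyu
  have hymu : Λ.comp l' β h2 = y.seg m u := by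
    rw [← heq, ← hcμα]
    exact comp_congr h1 hev.symm
  have hmu : m + Λ.d l' ≤ u := by
    intro i
    have hd1 := congrFun hdsum i
    have hd2 := congrFun hdμ i
    have hd3 : m i ≤ n i := hmn i
    simp only [Pi.add_apply, Pi.sup_apply, Pi.sub_apply, hu] at hd1 hd2 ⊢
    omega
  obtain ⟨ha, -⟩ := y.seg_split (fun i => Nat.le_add_right _ _) hmu hyu hymu
    (funext fun i => by simp only [Pi.sub_apply, Pi.add_apply]; omega)
  exact ⟨l', hl'E, KPath.dom_mono hmu hyu, ha.symm⟩

end TKG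


open TKG in
/-- For a compactly aligned topological `k`-graph: shifts and concatenations of boundary
paths are boundary paths; consequently `∂Λ` is an invariant subset of the unit space of
`G_Λ`. -/
theorem boundary_invariant
    {k : ℕ} {Obj Mor : Type} [TopologicalSpace Obj] [TopologicalSpace Mor]
    (Λ : TopKGraph k Obj Mor) (hΛ : CompactlyAligned Λ) :
    (∀ x : KPath Λ, IsBoundary x → ∀ m : Fin k → ℕ, x.dom m →
      ∀ y : KPath Λ, IsShiftOf m x y → IsBoundary y) ∧
    (∀ x : KPath Λ, IsBoundary x → ∀ l : Mor, Λ.s l = x.rng →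
      ∀ y : KPath Λ, IsConcatOf l x y → IsBoundary y) ∧
    (∀ t ∈ PathGroupoidCarrier Λ, (IsBoundary t.1 ↔ IsBoundary t.2.2)) := by
  refine ⟨fun x hx m _ y hsh => shift_boundary hx hsh,
    fun x hx l _ y hcon => concat_boundary hΛ hx hcon, ?_⟩
  rintro ⟨x1, mm, x2⟩ ⟨p, q, -, z, h1, h2⟩
  constructor
  · intro hb
    exact concat_boundary hΛ (shift_boundary hb h1) (shift_concat h2)
  · intro hb
    exact concat_boundary hΛ (shift_boundary hb h2) (shift_concat h1)
end

section
/- If Λ is a proper topological k-graph without sources, then every boundary path x ∈ ∂Λ has degree d(x) = (∞, …, ∞). -/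
open Set

open TKG in
/-- If `Λ` is a proper topological `k`-graph without sources, then every boundary path
has degree `(∞, …, ∞)`. -/
theorem boundary_deg_top_of_proper_noSources
    {k : ℕ} {Obj Mor : Type} [TopologicalSpace Obj] [TopologicalSpace Mor]
    (Λ : TopKGraph k Obj Mor) (hp : ProperGraph Λ) (hs : NoSources Λ)
    (x : KPath Λ) (hx : IsBoundary x) :
    ∀ i : Fin k, x.deg i = ⊤ := by
  intro i
  by_contra hne
  obtain ⟨n, hn⟩ := WithTop.ne_top_iff_exists.mp hne
  set m : Fin k → ℕ := Pi.single i n with hm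
  have hdom : x.dom m := by
    intro j
    by_cases hj : j = i
    · subst hj; simp [hm, ← hn]; exact le_of_eq rfl
    · simp [hm, Pi.single_apply, hj]
  have := Λ.locallyCompactObj
  obtain ⟨U, hUc, hUn⟩ := exists_compact_mem_nhds (x.vtx m)
  set E : Set Mor := {f : Mor | Λ.d f = Pi.single i 1 ∧ Λ.r f ∈ U} with hE
  have hEc : IsCompact E := hp _ U hUc
  have hrE : Λ.r '' E = U := by
    apply Set.Subset.antisymm
    · rintro _ ⟨f, hf, rfl⟩; exact hf.2
    · intro u hu
      obtain ⟨f, hdf, hrf⟩ := hs u i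
      exact ⟨f, ⟨hdf, hrf ▸ hu⟩, hrf⟩
  have hexh : Exhaustive Λ (Λ.r '' E) E := by
    intro l hrl
    rw [hrE] at hrl
    by_cases h1 : 1 ≤ Λ.d l i
    · have hfac : Λ.d l = Pi.single i 1 + (Λ.d l - Pi.single i 1) := by
        funext j
        by_cases hj : j = i
        · subst hj; simp; omega
        · simp [Pi.single_apply, hj]
      obtain ⟨⟨g, h⟩, ⟨hs1, hcomp, hdg, hdh⟩, -⟩ := Λ.factor l _ _ hfac
      have hrg : Λ.r g = Λ.r l := by rw [← hcomp, Λ.r_comp]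
      refine ⟨g, ⟨hdg, hrg ▸ hrl⟩, ⟨Λ.ident (Λ.s l), h⟩, ?_⟩
      refine ⟨(Λ.r_ident (Λ.s l)).symm, hs1, ?_, ?_⟩
      · rw [Λ.comp_ident, hcomp]
      · rw [Λ.d_ident, add_zero, hdg]
        have hle : Pi.single i 1 ≤ Λ.d l := by
          intro j
          by_cases hj : j = i
          · subst hj; simpa using h1
          · simp [Pi.single_apply, hj]
        exact (sup_eq_left.mpr hle).symm
    · push_neg at h1
      have h0 : Λ.d l i = 0 := by omega
      obtain ⟨f, hdf, hrf⟩ := hs (Λ.s l) i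
      have hfac : Λ.d (Λ.comp l f hrf.symm) = Pi.single i 1 + Λ.d l := by
        rw [Λ.d_comp, hdf, add_comm]
      obtain ⟨⟨g, h⟩, ⟨hs1, hcomp, hdg, hdh⟩, -⟩ := Λ.factor _ _ _ hfac
      have hrg : Λ.r g = Λ.r l := by
        have := Λ.r_comp g h hs1
        rw [hcomp, Λ.r_comp] at this
        exact this.symm
      refine ⟨g, ⟨hdg, hrg ▸ hrl⟩, ⟨f, h⟩, ?_⟩
      refine ⟨hrf.symm, hs1, ?_, ?_⟩
      · rw [hcomp]
      · rw [hdf, hdg]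
        funext j
        by_cases hj : j = i
        · subst hj
          simp [Pi.add_apply, h0]
        · simp [Pi.single_apply, hj]
  obtain ⟨l, hlE, hdom', -⟩ := hx m hdom E ⟨hEc, hrE ▸ hUn, hexh⟩
  have := hdom' i
  rw [hlE.1] at this
  simp only [hm, Pi.add_apply, Pi.single_eq_same, Nat.cast_add, Nat.cast_one, ← hn] at this
  have h' : (n + 1 : ℕ) ≤ n := Nat.cast_le.mp this
  omega
end

section
/- If a topological k-graph Λ (with d : Λ → ℕ^k continuous) is compactly aligned and c : Λ → A is a continuous functor to a locally compact group A, then the skew product Λ ×_c A, with objects Λ^0 × A, morphisms Λ × A, r(λ,a) = (r(λ), a), s(λ,a) = (s(λ), a·c(λ)), composition (λ,a)(μ, a·c(λ)) = (λμ, a), and degree d(λ,a) = d(λ), is again a compactly aligned topological k-graph. -/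
open Set

namespace TKG

variable {k : ℕ} {Obj Mor : Type} [TopologicalSpace Obj] [TopologicalSpace Mor]

/-- Continuity of the initial-segment map: for `n + m = t` there is a continuous map
`g` on `Λ^t` picking out the degree-`n` initial segment. -/
lemma exists_ini (Λ : TopKGraph k Obj Mor) (n m t : Fin k → ℕ) (ht : n + m = t) :
    ∃ g : {f : Mor // Λ.d f = t} → Mor,
      Continuous g ∧
      ∀ f : {f : Mor // Λ.d f = t}, Λ.d (g f) = n ∧
        ∃ (α : Mor) (h : Λ.s (g f) = Λ.r α), Λ.comp (g f) α h = f.1 ∧ Λ.d α = m := by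
  subst ht
  haveI := Λ.t2Mor
  let P := {pp : Mor × Mor // Λ.s pp.1 = Λ.r pp.2}
  let C := {u : P // Λ.d u.1.1 = n ∧ Λ.d u.1.2 = m}
  have hd1 : Continuous fun u : P => Λ.d u.1.1 :=
    Λ.continuous_d.comp (continuous_fst.comp continuous_subtype_val)
  have hd2 : Continuous fun u : P => Λ.d u.1.2 :=
    Λ.continuous_d.comp (continuous_snd.comp continuous_subtype_val)
  have hCopen : IsOpen {u : P | Λ.d u.1.1 = n ∧ Λ.d u.1.2 = m} :=
    ((isOpen_discrete {n}).preimage hd1).inter ((isOpen_discrete {m}).preimage hd2)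
  let e : C → {f : Mor // Λ.d f = n + m} := fun u =>
    ⟨Λ.comp u.1.1.1 u.1.1.2 u.1.2, by rw [Λ.d_comp, u.2.1, u.2.2]⟩
  have hec : Continuous e := by
    apply Continuous.subtype_mk
    exact Λ.continuous_comp.comp continuous_subtype_val
  have heo : IsOpenMap e := by
    intro W hW
    have h1 : IsOpen ((fun u : C => Λ.comp u.1.1.1 u.1.1.2 u.1.2) '' W) := by
      have hrw : (fun u : C => Λ.comp u.1.1.1 u.1.1.2 u.1.2)
          = (fun q : P => Λ.comp q.1.1 q.1.2 q.2) ∘ (Subtype.val : C → P) := rfl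
      rw [hrw, image_comp]
      exact Λ.isOpenMap_comp _ (hCopen.isOpenMap_subtype_val _ hW)
    rw [Topology.IsEmbedding.subtypeVal.isOpen_iff]
    refine ⟨_, h1, ?_⟩
    ext x
    simp only [mem_preimage, mem_image]
    constructor
    · rintro ⟨u, hu, hux⟩; exact ⟨u, hu, Subtype.ext hux⟩
    · rintro ⟨u, hu, hux⟩; exact ⟨u, hu, congrArg Subtype.val hux⟩
  have hinj : Function.Injective e := by
    rintro u v huv
    obtain ⟨w, _hw, hwu⟩ := Λ.factor (Λ.comp u.1.1.1 u.1.1.2 u.1.2) n m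
      (by rw [Λ.d_comp, u.2.1, u.2.2])
    have hu' : u.1.1 = w := hwu u.1.1 ⟨u.1.2, rfl, u.2.1, u.2.2⟩
    have hv' : v.1.1 = w := hwu v.1.1
      ⟨v.1.2, (congrArg Subtype.val huv).symm, v.2.1, v.2.2⟩
    exact Subtype.ext (Subtype.ext (hu'.trans hv'.symm))
  have hsurj : Function.Surjective e := by
    rintro ⟨f, hf⟩
    obtain ⟨w, ⟨hw1, hw2, hw3, hw4⟩, -⟩ := Λ.factor f n m hf
    exact ⟨⟨⟨w, hw1⟩, hw3, hw4⟩, Subtype.ext hw2⟩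
  let H : C ≃ₜ {f : Mor // Λ.d f = n + m} :=
    Equiv.toHomeomorphOfContinuousOpen (Equiv.ofBijective e ⟨hinj, hsurj⟩) hec heo
  refine ⟨fun f => (H.symm f).1.1.1, ?_, ?_⟩
  · exact continuous_fst.comp
      (continuous_subtype_val.comp (continuous_subtype_val.comp H.symm.continuous))
  · intro f
    have hef : e (H.symm f) = f := H.apply_symm_apply f
    refine ⟨(H.symm f).2.1, (H.symm f).1.1.2, (H.symm f).1.2, ?_, (H.symm f).2.2⟩
    exact congrArg Subtype.val hef

end TKG

open TKG in
/-- If `Λ` is a compactly aligned topological `k`-graph and `c : Λ → A` a continuous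
functor to a locally compact group `A`, then the skew product `Λ ×_c A` — with objects
`Λ^0 × A`, morphisms `Λ × A`, `r(λ,a) = (r(λ), a)`, `s(λ,a) = (s(λ), a·c(λ))`,
composition `(λ,a)(μ, a·c(λ)) = (λμ, a)` and degree `d(λ,a) = d(λ)` — is again a
compactly aligned topological `k`-graph. -/
theorem skew_product_compactly_aligned
    {k : ℕ} {Obj Mor : Type} [TopologicalSpace Obj] [TopologicalSpace Mor]
    (Λ : TopKGraph k Obj Mor) (hΛ : CompactlyAligned Λ)
    (A : Type) [TopologicalSpace A] [Group A] [IsTopologicalGroup A]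
    [LocallyCompactSpace A] [T2Space A] [SecondCountableTopology A]
    (c : Mor → A) (hc : Continuous c)
    (hmul : ∀ (f g : Mor) (h : Λ.s f = Λ.r g), c (Λ.comp f g h) = c f * c g)
    (hone : ∀ v : Obj, c (Λ.ident v) = 1) :
    ∃ SP : TopKGraph k (Obj × A) (Mor × A),
      SP.r = (fun p => (Λ.r p.1, p.2)) ∧
      SP.s = (fun p => (Λ.s p.1, p.2 * c p.1)) ∧
      SP.d = (fun p => Λ.d p.1) ∧
      SP.ident = (fun va => (Λ.ident va.1, va.2)) ∧
      (∀ (f g : Mor × A) (h : SP.s f = SP.r g) (h' : Λ.s f.1 = Λ.r g.1),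
        SP.comp f g h = (Λ.comp f.1 g.1 h', f.2)) ∧
      CompactlyAligned SP := by
  classical
  haveI := Λ.t2Mor
  haveI := Λ.t2Obj
  haveI := Λ.secondCountableMor
  haveI := Λ.secondCountableObj
  haveI := Λ.locallyCompactMor
  haveI := Λ.locallyCompactObj
  -- the twist homeomorphism of `Mor × A`
  let τ : Mor × A ≃ₜ Mor × A :=
    { toFun := fun p => (p.1, p.2 * c p.1)
      invFun := fun p => (p.1, p.2 * (c p.1)⁻¹)
      left_inv := fun p => by simp
      right_inv := fun p => by simp
      continuous_toFun := by fun_prop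
      continuous_invFun := by fun_prop }
  have hmap : IsLocalHomeomorph (Prod.map Λ.s (@id A)) := by
    intro x
    obtain ⟨e, hx, he⟩ := Λ.isLocalHomeomorph_s x.1
    refine ⟨e.prod (OpenPartialHomeomorph.refl A), ⟨hx, trivial⟩, ?_⟩
    rw [he]; rfl
  let SP : TopKGraph k (Obj × A) (Mor × A) :=
    { r := fun p => (Λ.r p.1, p.2)
      s := fun p => (Λ.s p.1, p.2 * c p.1)
      ident := fun va => (Λ.ident va.1, va.2)
      comp := fun f g h => (Λ.comp f.1 g.1 (congrArg Prod.fst h), f.2)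
      d := fun p => Λ.d p.1
      r_ident := fun v => Prod.ext (Λ.r_ident v.1) rfl
      s_ident := fun v => Prod.ext (Λ.s_ident v.1) (by show v.2 * c (Λ.ident v.1) = v.2; rw [hone]; exact mul_one v.2)
      d_ident := fun v => Λ.d_ident v.1
      r_comp := fun f g h => Prod.ext (Λ.r_comp f.1 g.1 _) rfl
      s_comp := fun f g h => Prod.ext (Λ.s_comp f.1 g.1 _) (by
        show f.2 * c (Λ.comp f.1 g.1 (congrArg Prod.fst h)) = g.2 * c g.1
        have h2 : f.2 * c f.1 = g.2 := congrArg Prod.snd h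
        rw [hmul, ← h2, mul_assoc])
      d_comp := fun f g h => Λ.d_comp f.1 g.1 _
      ident_comp := fun f h => Prod.ext (Λ.ident_comp f.1 (congrArg Prod.fst h)) rfl
      comp_ident := fun f h => Prod.ext (Λ.comp_ident f.1 (congrArg Prod.fst h)) rfl
      comp_assoc := fun f g h hfg hgh h1 h2 => Prod.ext
        (Λ.comp_assoc f.1 g.1 h.1 (congrArg Prod.fst hfg) (congrArg Prod.fst hgh)
          (congrArg Prod.fst h1) (congrArg Prod.fst h2)) rfl
      factor := by
        rintro ⟨f, a⟩ m n hd
        obtain ⟨⟨g, h⟩, ⟨hsr, hcomp, hdg, hdh⟩, huniq⟩ := Λ.factor f m n hd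
        refine ⟨((g, a), (h, a * c g)), ⟨Prod.ext hsr rfl, Prod.ext hcomp rfl, hdg, hdh⟩, ?_⟩
        rintro ⟨⟨g1, a1⟩, ⟨h1, b1⟩⟩ ⟨hy, hycomp, hyd1, hyd2⟩
        have ha1 : a1 = a := congrArg Prod.snd hycomp
        have hb1 : a1 * c g1 = b1 := congrArg Prod.snd hy
        have hgh : (g1, h1) = (g, h) := huniq (g1, h1)
          ⟨congrArg Prod.fst hy, congrArg Prod.fst hycomp, hyd1, hyd2⟩
        have hg1 : g1 = g := congrArg Prod.fst hgh
        have hh1 : h1 = h := congrArg Prod.snd hgh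
        subst ha1 hg1 hh1
        exact Prod.ext rfl (Prod.ext rfl hb1.symm)
      secondCountableObj := by infer_instance
      secondCountableMor := by infer_instance
      locallyCompactObj := by infer_instance
      locallyCompactMor := by infer_instance
      t2Obj := by infer_instance
      t2Mor := by infer_instance
      continuous_r := (Λ.continuous_r.comp continuous_fst).prodMk continuous_snd
      continuous_s := (Λ.continuous_s.comp continuous_fst).prodMk
        (continuous_snd.mul (hc.comp continuous_fst))
      isLocalHomeomorph_s := hmap.comp τ.isLocalHomeomorph
      continuous_comp := by
        have hmid : Continuous fun x : {p : (Mor × A) × (Mor × A) //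
            (Λ.s p.1.1, p.1.2 * c p.1.1) = (Λ.r p.2.1, p.2.2)} =>
            (⟨(x.1.1.1, x.1.2.1), congrArg Prod.fst x.2⟩ :
              {q : Mor × Mor // Λ.s q.1 = Λ.r q.2}) := by
          apply Continuous.subtype_mk
          exact (continuous_fst.comp (continuous_fst.comp continuous_subtype_val)).prodMk
            (continuous_fst.comp (continuous_snd.comp continuous_subtype_val))
        exact (Λ.continuous_comp.comp hmid).prodMk
          (continuous_snd.comp (continuous_fst.comp continuous_subtype_val))
      isOpenMap_comp := by
        let Q := {q : Mor × Mor // Λ.s q.1 = Λ.r q.2}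
        have key : IsOpenMap fun z : Q × A => (Λ.comp z.1.1.1 z.1.1.2 z.1.2, z.2) := by
          have := Λ.isOpenMap_comp.prodMap (IsOpenMap.id : IsOpenMap (@id A))
          exact this
        let H : {p : (Mor × A) × (Mor × A) //
            (Λ.s p.1.1, p.1.2 * c p.1.1) = (Λ.r p.2.1, p.2.2)} ≃ₜ Q × A :=
          { toFun := fun p => (⟨(p.1.1.1, p.1.2.1), congrArg Prod.fst p.2⟩, p.1.1.2)
            invFun := fun z => ⟨((z.1.1.1, z.2), (z.1.1.2, z.2 * c z.1.1.1)),
              Prod.ext z.1.2 rfl⟩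
            left_inv := by
              rintro ⟨⟨⟨f1, f2⟩, ⟨g1, g2⟩⟩, hp⟩
              have h2 : f2 * c f1 = g2 := congrArg Prod.snd hp
              exact Subtype.ext (Prod.ext rfl (Prod.ext rfl h2))
            right_inv := by
              rintro ⟨⟨⟨q1, q2⟩, hq⟩, a⟩
              rfl
            continuous_toFun := by
              have hmid : Continuous fun x : {p : (Mor × A) × (Mor × A) //
                  (Λ.s p.1.1, p.1.2 * c p.1.1) = (Λ.r p.2.1, p.2.2)} =>
                  (⟨(x.1.1.1, x.1.2.1), congrArg Prod.fst x.2⟩ :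
                    {q : Mor × Mor // Λ.s q.1 = Λ.r q.2}) := by
                apply Continuous.subtype_mk
                exact (continuous_fst.comp (continuous_fst.comp continuous_subtype_val)).prodMk
                  (continuous_fst.comp (continuous_snd.comp continuous_subtype_val))
              exact hmid.prodMk
                (continuous_snd.comp (continuous_fst.comp continuous_subtype_val))
            continuous_invFun := by
              apply Continuous.subtype_mk
              have hc1 : Continuous fun z : Q × A => z.1.1.1 :=
                continuous_fst.comp (continuous_subtype_val.comp continuous_fst)
              have hc2 : Continuous fun z : Q × A => z.1.1.2 :=
                continuous_snd.comp (continuous_subtype_val.comp continuous_fst)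
              exact (hc1.prodMk continuous_snd).prodMk
                (hc2.prodMk (continuous_snd.mul (hc.comp hc1))) }
        have hfac : (fun p : {p : (Mor × A) × (Mor × A) //
              (Λ.s p.1.1, p.1.2 * c p.1.1) = (Λ.r p.2.1, p.2.2)} =>
              (Λ.comp p.1.1.1 p.1.2.1 (congrArg Prod.fst p.2), p.1.1.2))
            = (fun z : Q × A => (Λ.comp z.1.1.1 z.1.1.2 z.1.2, z.2)) ∘ H := rfl
        exact hfac ▸ key.comp H.isOpenMap
      continuous_d := Λ.continuous_d.comp continuous_fst }
  refine ⟨SP, rfl, rfl, rfl, rfl, fun f g h h' => rfl, ?_⟩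
  intro p q U V hU hV hUc hVc
  set s0 : Fin k → ℕ := p ⊔ q with hs0
  have hps : p + (s0 - p) = s0 := by
    funext i
    simp only [Pi.add_apply, Pi.sub_apply, hs0, Pi.sup_apply]
    omega
  have hqs : q + (s0 - q) = s0 := by
    funext i
    simp only [Pi.add_apply, Pi.sub_apply, hs0, Pi.sup_apply]
    omega
  obtain ⟨g1, hg1c, hg1⟩ := exists_ini Λ p (s0 - p) s0 hps
  obtain ⟨g2, hg2c, hg2⟩ := exists_ini Λ q (s0 - q) s0 hqs
  have hU1 : ∀ x ∈ U, Λ.d x.1 = p := fun x hx => hU hx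
  have hV1 : ∀ x ∈ V, Λ.d x.1 = q := fun x hx => hV hx
  have hK : IsCompact (MCE Λ (Prod.fst '' U) (Prod.fst '' V)) := by
    refine hΛ p q _ _ ?_ ?_ (hUc.image continuous_fst) (hVc.image continuous_fst)
    · rintro f ⟨x, hx, rfl⟩; exact hU1 x hx
    · rintro f ⟨x, hx, rfl⟩; exact hV1 x hx
  have hsliceclosed : IsClosed {f : Mor | Λ.d f = s0} :=
    (isClosed_discrete {s0}).preimage Λ.continuous_d
  have hvalemb : Topology.IsClosedEmbedding
      (Subtype.val : {f : Mor // Λ.d f = s0} → Mor) :=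
    Topology.IsClosedEmbedding.subtypeVal hsliceclosed
  have hKpre : IsCompact (Subtype.val ⁻¹' (MCE Λ (Prod.fst '' U) (Prod.fst '' V)) :
      Set {f : Mor // Λ.d f = s0}) := hvalemb.isCompact_preimage hK
  let T : Set ({f : Mor // Λ.d f = s0} × A) :=
    {z | (g1 z.1, z.2) ∈ U ∧ (g2 z.1, z.2) ∈ V}
  have c1 : Continuous fun z : {f : Mor // Λ.d f = s0} × A => (g1 z.1, z.2) :=
    (hg1c.comp continuous_fst).prodMk continuous_snd
  have c2 : Continuous fun z : {f : Mor // Λ.d f = s0} × A => (g2 z.1, z.2) :=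
    (hg2c.comp continuous_fst).prodMk continuous_snd
  have hTclosed : IsClosed T :=
    (hUc.isClosed.preimage c1).inter (hVc.isClosed.preimage c2)
  have hTsub : T ⊆ (Subtype.val ⁻¹' (MCE Λ (Prod.fst '' U) (Prod.fst '' V))) ×ˢ
      (Prod.snd '' U) := by
    rintro ⟨f, a⟩ ⟨h1, h2⟩
    obtain ⟨hd1, α, hα, hcα, hdα⟩ := hg1 f
    obtain ⟨hd2, β, hβ, hcβ, hdβ⟩ := hg2 f
    refine ⟨⟨g1 f, ⟨_, h1, rfl⟩, g2 f, ⟨_, h2, rfl⟩, ?_, ⟨α, hα, hcα⟩, ⟨β, hβ, hcβ⟩⟩,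
      ⟨(g1 f, a), h1, rfl⟩⟩
    rw [hd1, hd2]; exact f.2
  have hTcomp : IsCompact T :=
    IsCompact.of_isClosed_subset (hKpre.prod (hUc.image continuous_snd)) hTclosed hTsub
  have himage : MCE SP U V
      = (fun z : {f : Mor // Λ.d f = s0} × A => (z.1.1, z.2)) '' T := by
    ext ⟨f, a⟩
    constructor
    · rintro ⟨⟨l, al⟩, hlU, ⟨m, am⟩, hmV, hdeg, ⟨⟨α, aα⟩, hα, hcα⟩, ⟨⟨β, aβ⟩, hβ, hcβ⟩⟩
      have hal : al = a := congrArg Prod.snd hcα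
      have ham : am = a := congrArg Prod.snd hcβ
      have hfl : Λ.comp l α (congrArg Prod.fst hα) = f := congrArg Prod.fst hcα
      have hfm : Λ.comp m β (congrArg Prod.fst hβ) = f := congrArg Prod.fst hcβ
      have hdl : Λ.d l = p := hU1 _ hlU
      have hdm : Λ.d m = q := hV1 _ hmV
      have hdeg' : Λ.d f = Λ.d l ⊔ Λ.d m := hdeg
      have hf : Λ.d f = s0 := by rw [hdeg', hdl, hdm]
      have hdα : Λ.d α = s0 - p := by
        have hh := Λ.d_comp l α (congrArg Prod.fst hα)
        rw [hfl, hf, hdl] at hh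
        funext i
        have hi := congrFun hh i
        simp only [Pi.add_apply, Pi.sub_apply] at hi ⊢
        omega
      have hdβ : Λ.d β = s0 - q := by
        have hh := Λ.d_comp m β (congrArg Prod.fst hβ)
        rw [hfm, hf, hdm] at hh
        funext i
        have hi := congrFun hh i
        simp only [Pi.add_apply, Pi.sub_apply] at hi ⊢
        omega
      obtain ⟨he1, α', hα', hcα', hdα'⟩ := hg1 ⟨f, hf⟩
      obtain ⟨he2, β', hβ', hcβ', hdβ'⟩ := hg2 ⟨f, hf⟩
      obtain ⟨w, _, hwu⟩ := Λ.factor f p (s0 - p) (by rw [hf, hps])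
      have e1 : (l, α) = w := hwu (l, α) ⟨congrArg Prod.fst hα, hfl, hdl, hdα⟩
      have e2 : (g1 ⟨f, hf⟩, α') = w := hwu _ ⟨hα', hcα', he1, hdα'⟩
      have hl : g1 ⟨f, hf⟩ = l :=
        (congrArg Prod.fst e2).trans (congrArg Prod.fst e1).symm
      obtain ⟨w2, _, hwu2⟩ := Λ.factor f q (s0 - q) (by rw [hf, hqs])
      have e3 : (m, β) = w2 := hwu2 (m, β) ⟨congrArg Prod.fst hβ, hfm, hdm, hdβ⟩
      have e4 : (g2 ⟨f, hf⟩, β') = w2 := hwu2 _ ⟨hβ', hcβ', he2, hdβ'⟩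
      have hm : g2 ⟨f, hf⟩ = m :=
        (congrArg Prod.fst e4).trans (congrArg Prod.fst e3).symm
      refine ⟨(⟨f, hf⟩, a), ⟨?_, ?_⟩, rfl⟩
      · rw [hl]; exact hal ▸ hlU
      · rw [hm]; exact ham ▸ hmV
    · rintro ⟨⟨⟨f', hf'⟩, a'⟩, ⟨h1, h2⟩, heq⟩
      cases heq
      obtain ⟨hd1, α, hα, hcα, hdα⟩ := hg1 ⟨f', hf'⟩
      obtain ⟨hd2, β, hβ, hcβ, hdβ⟩ := hg2 ⟨f', hf'⟩
      refine ⟨(g1 ⟨f', hf'⟩, a'), h1, (g2 ⟨f', hf'⟩, a'), h2, ?_,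
        ⟨(α, a' * c (g1 ⟨f', hf'⟩)), Prod.ext hα rfl, Prod.ext hcα rfl⟩,
        ⟨(β, a' * c (g2 ⟨f', hf'⟩)), Prod.ext hβ rfl, Prod.ext hcβ rfl⟩⟩
      show Λ.d f' = Λ.d (g1 ⟨f', hf'⟩) ⊔ Λ.d (g2 ⟨f', hf'⟩)
      rw [hd1, hd2]; exact hf'
  rw [himage]
  exact hTcomp.image ((continuous_subtype_val.comp continuous_fst).prodMk continuous_snd)
end

section
/- Let Λ be a compactly aligned topological k-graph, A a locally compact group, and c : Λ → A a continuous functor. Then the map c̃ : G_Λ → A defined by c̃(λx, d(λ)−d(μ), μx) = c(λ)c(μ)^{-1} is a well-defined continuous groupoid homomorphism (functor). -/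
open Set

namespace TKGAux

open TKG Set

variable {k : ℕ} {Obj Mor : Type} [TopologicalSpace Obj] [TopologicalSpace Mor]
variable {Λ : TopKGraph k Obj Mor}

lemma enat_add_sub (n : ℕ) (b : ℕ∞) : (↑n + b) - ↑n = b := by
  cases b using ENat.recTopCoe with
  | top => simp
  | coe m => exact_mod_cast congrArg Nat.cast (Nat.add_sub_cancel_left (n := n) (m := m))

lemma enat_coe_sub (a b : ℕ) : ((a - b : ℕ) : ℕ∞) = ↑a - ↑b := by exact_mod_cast rfl

lemma KPath.ext' {x y : KPath Λ} (hdeg : x.deg = y.deg) (hseg : x.seg = y.seg) : x = y := by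
  cases x; cases y; cases hdeg; cases hseg; rfl

open Classical in
/-- The shift `σ^n x` of a path. -/
noncomputable def shiftPath (x : KPath Λ) (n : Fin k → ℕ) (hn : x.dom n) : KPath Λ where
  deg := fun i => x.deg i - (n i : ℕ∞)
  seg := fun p q =>
    if p ≤ q ∧ ∀ i, (q i : ℕ∞) ≤ x.deg i - (n i : ℕ∞) then x.seg (n + p) (n + q)
    else x.seg n n
  seg_junk := by
    intro p q h
    beta_reduce
    have h0 : ((0 : Fin k → ℕ) ≤ (0 : Fin k → ℕ)) ∧
        ∀ i, (((0 : Fin k → ℕ)) i : ℕ∞) ≤ x.deg i - (n i : ℕ∞) :=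
      ⟨le_refl _, fun i => by simp⟩
    rw [if_neg h, if_pos h0, add_zero]
  d_seg := by
    intro p q hpq hq
    beta_reduce
    have hnq : ∀ i, ((n + q) i : ℕ∞) ≤ x.deg i := fun i => by
      simpa [Nat.cast_add] using add_le_of_le_tsub_left_of_le (hn i) (hq i)
    rw [if_pos ⟨hpq, hq⟩,
      x.d_seg (n + p) (n + q) (fun i => add_le_add_right (hpq i) (n i)) hnq]
    funext i
    simp only [Pi.sub_apply, Pi.add_apply]
    omega
  seg_comp := by
    intro p q u hpq hqu hu
    beta_reduce
    have hq : ∀ i, (q i : ℕ∞) ≤ x.deg i - (n i : ℕ∞) := fun i =>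
      le_trans (Nat.cast_le.2 (hqu i)) (hu i)
    have hnu : ∀ i, ((n + u) i : ℕ∞) ≤ x.deg i := fun i => by
      simpa [Nat.cast_add] using add_le_of_le_tsub_left_of_le (hn i) (hu i)
    rw [if_pos ⟨hpq, hq⟩, if_pos ⟨hqu, hu⟩, if_pos ⟨le_trans hpq hqu, hu⟩]
    exact x.seg_comp (n + p) (n + q) (n + u) (fun i => add_le_add_right (hpq i) (n i))
      (fun i => add_le_add_right (hqu i) (n i)) hnu
  seg_ident := by
    intro p hp
    beta_reduce
    rw [if_pos ⟨le_refl p, fun i => hp i⟩]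
    exact x.seg_ident (n + p) (fun i => by
      simpa [Nat.cast_add] using add_le_of_le_tsub_left_of_le (hn i) (hp i))

open Classical in
lemma shift_seg (x : KPath Λ) (n : Fin k → ℕ) (hn : x.dom n) (p q : Fin k → ℕ)
    (hpq : p ≤ q) (hq : ∀ i, (q i : ℕ∞) ≤ x.deg i - (n i : ℕ∞)) :
    (shiftPath x n hn).seg p q = x.seg (n + p) (n + q) := by
  show (if _ then _ else _) = _
  rw [if_pos ⟨hpq, hq⟩]

lemma shift_unique {m : Fin k → ℕ} {x y y' : KPath Λ}
    (h : IsShiftOf m x y) (h' : IsShiftOf m x y') : y = y' := by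
  obtain ⟨hm, hdeg, hseg⟩ := h
  obtain ⟨hm', hdeg', hseg'⟩ := h'
  have hd : y.deg = y'.deg := funext fun i => (hdeg i).trans (hdeg' i).symm
  apply KPath.ext' hd
  funext p q
  by_cases hcond : p ≤ q ∧ ∀ i, (q i : ℕ∞) ≤ y.deg i
  · rw [hseg p q hcond.1 hcond.2,
      hseg' p q hcond.1 (fun i => by rw [← congrFun hd i]; exact hcond.2 i)]
  · have h0 : y.seg 0 0 = y'.seg 0 0 := by
      rw [hseg 0 0 (le_refl _) (fun i => by simp),
        hseg' 0 0 (le_refl _) (fun i => by simp)]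
    rw [y.seg_junk p q hcond,
      y'.seg_junk p q (fun hc' =>
        hcond ⟨hc'.1, fun i => by rw [congrFun hd i]; exact hc'.2 i⟩), h0]

lemma isShiftOf_comp {p n : Fin k → ℕ} {x z : KPath Λ}
    (h : IsShiftOf p x z) (hn : z.dom n) :
    IsShiftOf (p + n) x (shiftPath z n hn) := by
  obtain ⟨hp, hdeg, hseg⟩ := h
  refine ⟨fun i => ?_, fun i => ?_, ?_⟩
  · have h1 : (n i : ℕ∞) ≤ x.deg i - (p i : ℕ∞) := by
      rw [← hdeg i]; exact hn i
    simpa [Nat.cast_add] using add_le_of_le_tsub_left_of_le (hp i) h1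
  · show z.deg i - (n i : ℕ∞) = x.deg i - ((p + n) i : ℕ∞)
    rw [hdeg i, tsub_tsub]
    simp [Nat.cast_add]
  · intro a b hab hb
    rw [shift_seg z n hn a b hab (fun i => hb i),
      hseg (n + a) (n + b) (fun i => add_le_add_right (hab i) (n i)) (fun i => by
        have := hb i
        simpa [Nat.cast_add] using add_le_of_le_tsub_left_of_le (hn i) (hb i))]
    simp [add_assoc]

lemma concat_to_shift {l : Mor} {x y : KPath Λ} (h : IsConcatOf l x y) :
    IsShiftOf (Λ.d l) y x := by
  obtain ⟨hs, hdeg, hinit, htail⟩ := h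
  refine ⟨fun i => ?_, fun i => ?_, ?_⟩
  · rw [hdeg i]; exact le_self_add
  · rw [hdeg i, enat_add_sub]
  · intro P Q hPQ hQ
    have hdomQ : ∀ i, ((Λ.d l + Q) i : ℕ∞) ≤ y.deg i := fun i => by
      rw [hdeg i]
      simp only [Pi.add_apply, Nat.cast_add]
      exact add_le_add_right (hQ i) _
    have hPdeg : ∀ i, (P i : ℕ∞) ≤ x.deg i := fun i =>
      le_trans (Nat.cast_le.2 (hPQ i)) (hQ i)
    have hdomP : ∀ i, ((Λ.d l + P) i : ℕ∞) ≤ y.deg i := fun i => by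
      rw [hdeg i]
      simp only [Pi.add_apply, Nat.cast_add]
      exact add_le_add_right (hPdeg i) _
    obtain ⟨hQ1, hQ2⟩ := htail (Λ.d l + Q) le_self_add hdomQ
    obtain ⟨hP1, hP2⟩ := htail (Λ.d l + P) le_self_add hdomP
    have hsubQ : Λ.d l + Q - Λ.d l = Q := by funext i; simp
    have hsubP : Λ.d l + P - Λ.d l = P := by funext i; simp
    rw [hsubQ] at hQ1
    simp only [hsubQ] at hQ2
    rw [hsubP] at hP1
    simp only [hsubP] at hP2
    have hle1 : (0 : Fin k → ℕ) ≤ Λ.d l + P := fun i => Nat.zero_le _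
    have hle2 : Λ.d l + P ≤ Λ.d l + Q := fun i => by
      have h' : P i ≤ Q i := hPQ i; simp only [Pi.add_apply]; omega
    have hdf : Λ.d (y.seg 0 (Λ.d l + Q)) = (Λ.d l + P) + (Q - P) := by
      rw [y.d_seg 0 (Λ.d l + Q) (fun i => Nat.zero_le _) hdomQ]
      funext i
      have h' : P i ≤ Q i := hPQ i
      simp only [Pi.sub_apply, Pi.add_apply, Pi.zero_apply]
      omega
    obtain ⟨g, hg, hu⟩ := Λ.factor _ (Λ.d l + P) (Q - P) hdf
    obtain ⟨hc1, hc1'⟩ := y.seg_comp 0 (Λ.d l + P) (Λ.d l + Q) hle1 hle2 hdomQ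
    have e1 : (y.seg 0 (Λ.d l + P), y.seg (Λ.d l + P) (Λ.d l + Q)) = g := by
      refine hu _ ⟨hc1, hc1', ?_, ?_⟩
      · rw [y.d_seg 0 (Λ.d l + P) hle1 hdomP]; funext i; simp
      · rw [y.d_seg (Λ.d l + P) (Λ.d l + Q) hle2 hdomQ]
        funext i
        simp only [Pi.sub_apply, Pi.add_apply]
        omega
    obtain ⟨hcx, hcx'⟩ := x.seg_comp 0 P Q (fun i => Nat.zero_le _) hPQ hQ
    have hcomp2 : Λ.s (Λ.comp l (x.seg 0 P) hP1) = Λ.r (x.seg P Q) := by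
      rw [Λ.s_comp]; exact hcx
    have hassoc : Λ.comp (Λ.comp l (x.seg 0 P) hP1) (x.seg P Q) hcomp2
        = y.seg 0 (Λ.d l + Q) := by
      rw [Λ.comp_assoc l (x.seg 0 P) (x.seg P Q) hP1 hcx hcomp2
        (by rw [hcx']; exact hQ1)]
      simp only [hcx']
      exact hQ2.symm
    have e2 : (Λ.comp l (x.seg 0 P) hP1, x.seg P Q) = g := by
      refine hu _ ⟨hcomp2, hassoc, ?_, x.d_seg P Q hPQ hQ⟩
      rw [Λ.d_comp, x.d_seg 0 P (fun i => Nat.zero_le _) hPdeg]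
      funext i; simp
    exact (congrArg Prod.snd (e1.trans e2.symm)).symm

lemma seg_concat {l : Mor} {x y : KPath Λ} (h : IsConcatOf l x y) :
    y.seg 0 (Λ.d l) = l := by
  obtain ⟨hs, hdeg, hinit, htail⟩ := h
  obtain ⟨a, ha, hda, hcomp⟩ := hinit (Λ.d l) (le_refl _)
  have hdfa : Λ.d a = 0 := by
    have h1 := Λ.d_comp (y.seg 0 (Λ.d l)) a ha
    rw [hcomp, hda] at h1
    funext i
    have := congrFun h1 i
    simp only [Pi.add_apply, Pi.zero_apply] at this ⊢
    omega
  obtain ⟨g, hg, hu⟩ := Λ.factor l (Λ.d l) 0 (by simp)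
  have e1 : (y.seg 0 (Λ.d l), a) = g := hu _ ⟨ha, hcomp, hda, hdfa⟩
  have hident : Λ.s l = Λ.r (Λ.ident (Λ.s l)) := (Λ.r_ident _).symm
  have e2 : (l, Λ.ident (Λ.s l)) = g :=
    hu _ ⟨hident, Λ.comp_ident l hident, rfl, Λ.d_ident _⟩
  exact congrArg Prod.fst (e1.trans e2.symm)

lemma shift_to_concat {p : Fin k → ℕ} {x z : KPath Λ} (h : IsShiftOf p x z) :
    IsConcatOf (x.seg 0 p) z x := by
  obtain ⟨hp, hdeg, hseg⟩ := h
  have hd : Λ.d (x.seg 0 p) = p := by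
    rw [x.d_seg 0 p (fun i => Nat.zero_le _) hp]; funext i; simp
  refine ⟨?_, ?_, ?_, ?_⟩
  · obtain ⟨hh, -⟩ := x.seg_comp 0 p p (fun i => Nat.zero_le _) (le_refl _) hp
    rw [hh]
    show Λ.r (x.seg p p) = Λ.r (z.seg 0 0)
    rw [hseg 0 0 (le_refl _) (fun i => by simp), add_zero]
  · intro i; rw [hd, hdeg i, add_tsub_cancel_of_le (hp i)]
  · intro P hP
    rw [hd] at hP
    obtain ⟨hh, hcc⟩ := x.seg_comp 0 P p (fun i => Nat.zero_le _) hP hp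
    exact ⟨x.seg P p, hh, by
      rw [x.d_seg 0 P (fun i => Nat.zero_le _)
        (fun i => le_trans (Nat.cast_le.2 (hP i)) (hp i))]
      funext i; simp, hcc⟩
  · intro P hlP hPdeg
    rw [hd] at hlP ⊢
    have hsub : ∀ i, ((P - p) i : ℕ∞) ≤ z.deg i := fun i => by
      rw [hdeg i]
      simp only [Pi.sub_apply]
      rw [enat_coe_sub]
      exact tsub_le_tsub_right (hPdeg i) _
    have hz : z.seg 0 (P - p) = x.seg p P := by
      rw [hseg 0 (P - p) (fun i => Nat.zero_le _) hsub, add_zero]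
      congr 1
      funext i
      have h' : p i ≤ P i := hlP i
      simp only [Pi.add_apply, Pi.sub_apply]
      omega
    rw [hz]
    obtain ⟨hh, hcc⟩ := x.seg_comp 0 p P (fun i => Nat.zero_le _) hlP hPdeg
    exact ⟨hh, hcc.symm⟩

variable {A : Type} [Group A]

lemma stab (c : Mor → A) (hmul : ∀ (f g : Mor) (h : Λ.s f = Λ.r g),
      c (Λ.comp f g h) = c f * c g)
    {x y z : KPath Λ} {p q n : Fin k → ℕ}
    (hx : IsShiftOf p x z) (hy : IsShiftOf q y z) (hn : z.dom n) :
    c (x.seg 0 (p + n)) * (c (y.seg 0 (q + n)))⁻¹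
      = c (x.seg 0 p) * (c (y.seg 0 q))⁻¹ := by
  obtain ⟨hp, hdp, hsp⟩ := hx
  obtain ⟨hq, hdq, hsq⟩ := hy
  have hxd : ∀ i, (((p + n) i : ℕ) : ℕ∞) ≤ x.deg i := fun i => by
    have h1 : (n i : ℕ∞) ≤ x.deg i - (p i : ℕ∞) := by rw [← hdp i]; exact hn i
    simpa [Nat.cast_add] using add_le_of_le_tsub_left_of_le (hp i) h1
  have hyd : ∀ i, (((q + n) i : ℕ) : ℕ∞) ≤ y.deg i := fun i => by
    have h1 : (n i : ℕ∞) ≤ y.deg i - (q i : ℕ∞) := by rw [← hdq i]; exact hn i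
    simpa [Nat.cast_add] using add_le_of_le_tsub_left_of_le (hq i) h1
  obtain ⟨h1, hc1⟩ := x.seg_comp 0 p (p + n) (fun i => Nat.zero_le _) le_self_add hxd
  obtain ⟨h2, hc2⟩ := y.seg_comp 0 q (q + n) (fun i => Nat.zero_le _) le_self_add hyd
  have ex : x.seg p (p + n) = z.seg 0 n := by
    rw [hsp 0 n (fun i => Nat.zero_le _) hn, add_zero]
  have ey : y.seg q (q + n) = z.seg 0 n := by
    rw [hsq 0 n (fun i => Nat.zero_le _) hn, add_zero]
  rw [← hc1, ← hc2, hmul _ _ h1, hmul _ _ h2, ex, ey]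
  group

lemma isShiftOf_congr {m m' : Fin k → ℕ} {x z : KPath Λ} (h : m = m')
    (hs : IsShiftOf m x z) : IsShiftOf m' x z := h ▸ hs

/-- A shift representation of a groupoid triple. -/
def Rep (Λ : TopKGraph k Obj Mor) (t : GTriple Λ)
    (r : (Fin k → ℕ) × (Fin k → ℕ) × KPath Λ) : Prop :=
  t.2.1 = (fun i => (r.1 i : ℤ) - (r.2.1 i : ℤ)) ∧
    IsShiftOf r.1 t.1 r.2.2 ∧ IsShiftOf r.2.1 t.2.2 r.2.2

open Classical in
/-- The induced cocycle on the path groupoid. -/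
noncomputable def ctFun (Λ : TopKGraph k Obj Mor) (c : Mor → A) : GTriple Λ → A :=
  fun t =>
    if h : ∃ r, Rep Λ t r then
      c (t.1.seg 0 h.choose.1) * (c (t.2.2.seg 0 h.choose.2.1))⁻¹
    else 1

lemma indep (c : Mor → A) (hmul : ∀ (f g : Mor) (h : Λ.s f = Λ.r g),
      c (Λ.comp f g h) = c f * c g)
    (t : GTriple Λ) (r r' : (Fin k → ℕ) × (Fin k → ℕ) × KPath Λ)
    (h : Rep Λ t r) (h' : Rep Λ t r') :
    c (t.1.seg 0 r.1) * (c (t.2.2.seg 0 r.2.1))⁻¹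
      = c (t.1.seg 0 r'.1) * (c (t.2.2.seg 0 r'.2.1))⁻¹ := by
  obtain ⟨x, m, y⟩ := t
  obtain ⟨p, q, z⟩ := r
  obtain ⟨p', q', z'⟩ := r'
  obtain ⟨hm, hx, hy⟩ := h
  obtain ⟨hm', hx', hy'⟩ := h'
  dsimp only at *
  set N := p ⊔ p' with hN
  have hpN : p ≤ N := le_sup_left
  have hp'N : p' ≤ N := le_sup_right
  have hNdeg : ∀ i, (N i : ℕ∞) ≤ x.deg i := fun i => by
    rcases le_total (p i) (p' i) with hle | hle
    · have hNi : N i = p' i := by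
        simp only [hN, Pi.sup_apply]; exact sup_eq_right.2 hle
      rw [hNi]; exact hx'.1 i
    · have hNi : N i = p i := by
        simp only [hN, Pi.sup_apply]; exact sup_eq_left.2 hle
      rw [hNi]; exact hx.1 i
  have hzn : z.dom (N - p) := fun i => by
    rw [hx.2.1 i]
    simp only [Pi.sub_apply]
    rw [enat_coe_sub]
    exact tsub_le_tsub_right (hNdeg i) _
  have hz'n : z'.dom (N - p') := fun i => by
    rw [hx'.2.1 i]
    simp only [Pi.sub_apply]
    rw [enat_coe_sub]
    exact tsub_le_tsub_right (hNdeg i) _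
  have e1 := stab c hmul hx hy hzn
  have e2 := stab c hmul hx' hy' hz'n
  have hpn : p + (N - p) = N := by
    funext i; have h' : p i ≤ N i := hpN i; simp only [Pi.add_apply, Pi.sub_apply]; omega
  have hp'n : p' + (N - p') = N := by
    funext i; have h' : p' i ≤ N i := hp'N i; simp only [Pi.add_apply, Pi.sub_apply]; omega
  have hqq : q + (N - p) = q' + (N - p') := by
    funext i
    have h1 := congrFun hm i
    have h2 := congrFun hm' i
    have h3 := hpN i
    have h4 := hp'N i
    simp only [Pi.add_apply, Pi.sub_apply] at *
    omega
  rw [hpn, hqq] at e1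
  rw [hp'n] at e2
  rw [← e1, ← e2]

lemma ct_eq (c : Mor → A) (hmul : ∀ (f g : Mor) (h : Λ.s f = Λ.r g),
      c (Λ.comp f g h) = c f * c g)
    (t : GTriple Λ) (r : (Fin k → ℕ) × (Fin k → ℕ) × KPath Λ) (hr : Rep Λ t r) :
    ctFun Λ c t = c (t.1.seg 0 r.1) * (c (t.2.2.seg 0 r.2.1))⁻¹ := by
  have h : ∃ r, Rep Λ t r := ⟨r, hr⟩
  rw [ctFun, dif_pos h]
  exact indep c hmul t h.choose r h.choose_spec hr

lemma ct_concat (c : Mor → A) (hmul : ∀ (f g : Mor) (h : Λ.s f = Λ.r g),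
      c (Λ.comp f g h) = c f * c g)
    (t : GTriple Λ) (l mu : Mor) (x : KPath Λ)
    (h1 : IsConcatOf l x t.1) (h2 : IsConcatOf mu x t.2.2)
    (hm : t.2.1 = (fun i => (Λ.d l i : ℤ) - (Λ.d mu i : ℤ))) :
    ctFun Λ c t = c l * (c mu)⁻¹ := by
  have hr : Rep Λ t (Λ.d l, Λ.d mu, x) := ⟨hm, concat_to_shift h1, concat_to_shift h2⟩
  rw [ct_eq c hmul t _ hr]
  dsimp only
  rw [seg_concat h1, seg_concat h2]

end TKGAux

open TKG in
/-- For a compactly aligned topological `k`-graph `Λ` and a continuous functor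
`c : Λ → A` to a locally compact group, the assignment
`c̃(λx, d(λ)−d(μ), μx) = c(λ)c(μ)⁻¹` gives a well-defined continuous groupoid
homomorphism (functor) `c̃ : G_Λ → A`. -/
theorem induced_functor_on_path_groupoid
    {k : ℕ} {Obj Mor : Type} [TopologicalSpace Obj] [TopologicalSpace Mor]
    (Λ : TopKGraph k Obj Mor) (hΛ : CompactlyAligned Λ)
    (A : Type) [TopologicalSpace A] [Group A] [IsTopologicalGroup A]
    [LocallyCompactSpace A] [T2Space A]
    (c : Mor → A) (hc : Continuous c)
    (hmul : ∀ (f g : Mor) (h : Λ.s f = Λ.r g), c (Λ.comp f g h) = c f * c g)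
    (hone : ∀ v : Obj, c (Λ.ident v) = 1) :
    ∃ ct : GTriple Λ → A,
      -- well-definedness: on every representation `(λx, d(λ)−d(μ), μx)` the value is
      -- `c(λ)·c(μ)⁻¹`
      (∀ t ∈ PathGroupoidCarrier Λ, ∀ (l mu : Mor) (x : KPath Λ),
        IsConcatOf l x t.1 → IsConcatOf mu x t.2.2 →
        t.2.1 = (fun i => (Λ.d l i : ℤ) - (Λ.d mu i : ℤ)) →
        ct t = c l * (c mu)⁻¹) ∧
      -- continuity on `G_Λ`
      @ContinuousOn (GTriple Λ) A (groupoidTopology Λ) _ ct (PathGroupoidCarrier Λ) ∧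
      -- functoriality
      (∀ t ∈ PathGroupoidCarrier Λ, ∀ u ∈ PathGroupoidCarrier Λ,
        t.2.2 = u.1 → ct (t.1, t.2.1 + u.2.1, u.2.2) = ct t * ct u) := by
  classical
  refine ⟨TKGAux.ctFun Λ c, ?_, ?_, ?_⟩
  · intro t _ l mu x h1 h2 hm
    exact TKGAux.ct_concat c hmul t l mu x h1 h2 hm
  · letI : TopologicalSpace (GTriple Λ) := groupoidTopology Λ
    intro t ht
    obtain ⟨p, q, hm, z, hxz, hyz⟩ := ht
    have hrep : TKGAux.Rep Λ t (p, q, z) := ⟨hm, hxz, hyz⟩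
    have hctt : TKGAux.ctFun Λ c t
        = c (t.1.seg 0 p) * (c (t.2.2.seg 0 q))⁻¹ := TKGAux.ct_eq c hmul t _ hrep
    refine Filter.tendsto_def.mpr ?_
    intro O hO
    obtain ⟨O', hO'sub, hO'open, hO'mem⟩ := mem_nhds_iff.1 hO
    have hφ : Continuous fun lm : Mor × Mor => c lm.1 * (c lm.2)⁻¹ :=
      (hc.comp continuous_fst).mul (hc.comp continuous_snd).inv
    have hpre : IsOpen ((fun lm : Mor × Mor => c lm.1 * (c lm.2)⁻¹) ⁻¹' O') :=
      hO'open.preimage hφ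
    have hmemp : (t.1.seg 0 p, t.2.2.seg 0 q)
        ∈ (fun lm : Mor × Mor => c lm.1 * (c lm.2)⁻¹) ⁻¹' O' := by
      show c (t.1.seg 0 p) * (c (t.2.2.seg 0 q))⁻¹ ∈ O'
      rw [← hctt]
      exact hO'mem
    obtain ⟨U, V, hU, hV, hlamU, hmuV, hUV⟩ :=
      isOpen_prod_iff.1 hpre (t.1.seg 0 p) (t.2.2.seg 0 q) hmemp
    refine mem_nhdsWithin.2
      ⟨ZG Λ ((U ×ˢ V) ∩ {lm | Λ.s lm.1 = Λ.s lm.2}) t.2.1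
          ∩ (ZG Λ (∅ : Set (Mor × Mor)) t.2.1)ᶜ, ?_, ?_, ?_⟩
    · exact TopologicalSpace.GenerateOpen.basic _
        ⟨t.2.1, U, V, ∅, hU, hV, isCompact_empty, rfl⟩
    · constructor
      · have hc1 := TKGAux.shift_to_concat hxz
        have hc2 := TKGAux.shift_to_concat hyz
        have hdl : Λ.d (t.1.seg 0 p) = p := by
          rw [t.1.d_seg 0 p (fun i => Nat.zero_le _) hxz.1]; funext i; simp
        have hdm : Λ.d (t.2.2.seg 0 q) = q := by
          rw [t.2.2.d_seg 0 q (fun i => Nat.zero_le _) hyz.1]; funext i; simp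
        refine ⟨rfl, (t.1.seg 0 p, t.2.2.seg 0 q),
          ⟨⟨hlamU, hmuV⟩, hc1.1.trans hc2.1.symm⟩,
          hc1.1.trans hc2.1.symm, ?_, z, hc1, hc2⟩
        rw [hm]
        funext i
        simp [hdl, hdm]
      · rintro ⟨-, lm, hlm, -⟩
        exact hlm
    · rintro t' ⟨⟨hZG, -⟩, -⟩
      obtain ⟨hmt', lm, ⟨hlmUV, -⟩, hss', hdd', x', hcc1, hcc2⟩ := hZG
      have hval : TKGAux.ctFun Λ c t' = c lm.1 * (c lm.2)⁻¹ :=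
        TKGAux.ct_concat c hmul t' lm.1 lm.2 x' hcc1 hcc2 (hmt'.trans hdd'.symm)
      show TKGAux.ctFun Λ c t' ∈ O
      rw [hval]
      exact hO'sub (hUV hlmUV)
  · rintro ⟨x, m, y⟩ ht ⟨y', n, w⟩ hu htu
    dsimp only at htu
    subst htu
    obtain ⟨p, q, hm, z₁, hxz, hyz⟩ := ht
    obtain ⟨a, b, hn, z₂, hyz₂, hwz⟩ := hu
    dsimp only at hm hn hxz hyz hyz₂ hwz ⊢
    set s₀ := q ⊔ a with hs₀
    have hqs : q ≤ s₀ := le_sup_left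
    have has : a ≤ s₀ := le_sup_right
    have hsdeg : ∀ i, (s₀ i : ℕ∞) ≤ y.deg i := fun i => by
      rcases le_total (q i) (a i) with hle | hle
      · have hNi : s₀ i = a i := by
          simp only [hs₀, Pi.sup_apply]; exact sup_eq_right.2 hle
        rw [hNi]; exact hyz₂.1 i
      · have hNi : s₀ i = q i := by
          simp only [hs₀, Pi.sup_apply]; exact sup_eq_left.2 hle
        rw [hNi]; exact hyz.1 i
    have hz₁n : z₁.dom (s₀ - q) := fun i => by
      rw [hyz.2.1 i]
      simp only [Pi.sub_apply]
      rw [TKGAux.enat_coe_sub]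
      exact tsub_le_tsub_right (hsdeg i) _
    have hz₂n : z₂.dom (s₀ - a) := fun i => by
      rw [hyz₂.2.1 i]
      simp only [Pi.sub_apply]
      rw [TKGAux.enat_coe_sub]
      exact tsub_le_tsub_right (hsdeg i) _
    have hq' : q + (s₀ - q) = s₀ := by
      funext i; have h' : q i ≤ s₀ i := hqs i
      simp only [Pi.add_apply, Pi.sub_apply]; omega
    have ha' : a + (s₀ - a) = s₀ := by
      funext i; have h' : a i ≤ s₀ i := has i
      simp only [Pi.add_apply, Pi.sub_apply]; omega
    have hZ1 : IsShiftOf s₀ y (TKGAux.shiftPath z₁ _ hz₁n) :=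
      TKGAux.isShiftOf_congr hq' (TKGAux.isShiftOf_comp hyz hz₁n)
    have hZ2 : IsShiftOf s₀ y (TKGAux.shiftPath z₂ _ hz₂n) :=
      TKGAux.isShiftOf_congr ha' (TKGAux.isShiftOf_comp hyz₂ hz₂n)
    have hZeq : TKGAux.shiftPath z₁ _ hz₁n = TKGAux.shiftPath z₂ _ hz₂n :=
      TKGAux.shift_unique hZ1 hZ2
    have hX : IsShiftOf (p + (s₀ - q)) x (TKGAux.shiftPath z₁ _ hz₁n) :=
      TKGAux.isShiftOf_comp hxz hz₁n
    have hW : IsShiftOf (b + (s₀ - a)) w (TKGAux.shiftPath z₁ _ hz₁n) := by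
      rw [hZeq]; exact TKGAux.isShiftOf_comp hwz hz₂n
    have hrt : TKGAux.Rep Λ (x, m + n, w)
        (p + (s₀ - q), b + (s₀ - a), TKGAux.shiftPath z₁ _ hz₁n) := by
      refine ⟨?_, hX, hW⟩
      show m + n = _
      funext i
      have h1 := congrFun hm i
      have h2 := congrFun hn i
      have h3 : q i ≤ s₀ i := hqs i
      have h4 : a i ≤ s₀ i := has i
      simp only [Pi.add_apply, Pi.sub_apply] at *
      omega
    rw [TKGAux.ct_eq c hmul _ _ hrt,
      TKGAux.ct_eq c hmul (x, m, y) (p, q, z₁) ⟨hm, hxz, hyz⟩,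
      TKGAux.ct_eq c hmul (y, n, w) (a, b, z₂) ⟨hn, hyz₂, hwz⟩]
    dsimp only
    have e1 := TKGAux.stab c hmul hxz hyz hz₁n
    have e2 := TKGAux.stab c hmul hyz₂ hwz hz₂n
    rw [hq'] at e1
    rw [ha'] at e2
    rw [← e1, ← e2]
    group
end
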